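/- arXiv:1912.06426 — 8 statements merged into one kernel-verified Lean document; each statement's English description precedes it below -/
import Mathlib

section
/- The strategy ξ* is admissible (square-integrable with ∫₀ᵀ ξ*(t) dt = x) and is the unique minimizer of the execution-cost functional C over all admissible strategies: for every admissible strategy ξ that differs from ξ* on a set of positive Lebesgue measure, C(ξ*) < C(ξ). -/
/-
The cost is a quadratic functional: `C (a + h) = C a + ∫ (∇C a) h + Q h` with
`∇C a s = 2 η a s + γ ∫₀ᵀ a t e^{-ρ|t-s|} dt`. The quadratic part `Q h = η ∫ h² + γ ∫ h u`, where
`u t = ∫₀ᵗ h s e^{-ρ(t-s)} ds`, is positive for `h ≠ 0`: `u` is absolutely continuous with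
`u' = h - ρ u`, so `∫ h u = u(T)²/2 + ρ ∫ u²`. Hence an admissible `a` whose gradient is constant
on `[0, T]` is the unique minimiser, the linear term being a multiple of `∫ h = 0`.

For `a = α + β cosh (k (t - T/2))` the gradient is explicit: the relation `η (k² - ρ²) = γ ρ`
cancels its `cosh` term and the choice of `α` cancels the `e^{±ρ s}` terms coming from the
endpoints; `D` normalises `∫₀ᵀ ξ* = x`.
-/

open MeasureTheory Set intervalIntegral Real

theorem AbsolutelyContinuousOnInterval.integral_deriv_mul_eq_sub_of_ae_hasDerivAt
    {u v u' v' : ℝ → ℝ} {a b : ℝ}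
    (hu : AbsolutelyContinuousOnInterval u a b) (hv : AbsolutelyContinuousOnInterval v a b)
    (hu' : ∀ᵐ t, t ∈ uIcc a b → HasDerivAt u (u' t) t)
    (hv' : ∀ᵐ t, t ∈ uIcc a b → HasDerivAt v (v' t) t) :
    ∫ t in a..b, (u' t * v t + u t * v' t) = u b * v b - u a * v a := by
  rw [← hu.integral_deriv_mul_eq_sub hv]
  refine integral_congr_ae ?_
  filter_upwards [hu', hv'] with t htu htv ht
  rw [(htu (uIoc_subset_uIcc ht)).deriv, (htv (uIoc_subset_uIcc ht)).deriv]

noncomputable def expConv (ρ : ℝ) (f : ℝ → ℝ) (t : ℝ) : ℝ :=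
  ∫ s in (0:ℝ)..t, f s * exp (-ρ * (t - s))

noncomputable def expConvAdj (ρ T : ℝ) (f : ℝ → ℝ) (s : ℝ) : ℝ :=
  ∫ t in s..T, f t * exp (-ρ * (t - s))

section ExpConv

variable {ρ T : ℝ} {f : ℝ → ℝ}

theorem expConv_eq_exp_mul (ρ : ℝ) (f : ℝ → ℝ) (t : ℝ) :
    expConv ρ f t = exp (-ρ * t) * ∫ s in (0:ℝ)..t, f s * exp (ρ * s) := by
  rw [expConv, ← intervalIntegral.integral_const_mul]
  refine integral_congr fun s _ => ?_
  rw [show -ρ * (t - s) = -ρ * t + ρ * s by ring, exp_add]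
  ring

theorem expConvAdj_eq_exp_mul (ρ T : ℝ) (f : ℝ → ℝ) (s : ℝ) :
    expConvAdj ρ T f s = -(exp (ρ * s) * ∫ t in T..s, f t * exp (-ρ * t)) := by
  rw [expConvAdj, integral_symm, ← intervalIntegral.integral_const_mul]
  refine congrArg Neg.neg (integral_congr fun t _ => ?_)
  rw [show -ρ * (t - s) = ρ * s + -ρ * t by ring, exp_add]
  ring

theorem absolutelyContinuousOnInterval_exp_mul (c a b : ℝ) :
    AbsolutelyContinuousOnInterval (fun t => exp (c * t)) a b :=
  ContDiffOn.absolutelyContinuousOnInterval (by fun_prop)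

theorem IntervalIntegrable.absolutelyContinuousOnInterval_expConv
    (hf : IntervalIntegrable f volume 0 T) :
    AbsolutelyContinuousOnInterval (expConv ρ f) 0 T := by
  have hg : IntervalIntegrable (fun s => f s * exp (ρ * s)) volume 0 T :=
    hf.mul_continuousOn (by fun_prop)
  rw [show expConv ρ f = _ from funext (expConv_eq_exp_mul ρ f)]
  exact (absolutelyContinuousOnInterval_exp_mul _ 0 T).fun_mul
    (hg.absolutelyContinuousOnInterval_intervalIntegral left_mem_uIcc)

theorem IntervalIntegrable.absolutelyContinuousOnInterval_expConvAdj
    (hf : IntervalIntegrable f volume 0 T) :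
    AbsolutelyContinuousOnInterval (expConvAdj ρ T f) 0 T := by
  have hg : IntervalIntegrable (fun t => f t * exp (-ρ * t)) volume 0 T :=
    hf.mul_continuousOn (by fun_prop)
  rw [show expConvAdj ρ T f = _ from funext (expConvAdj_eq_exp_mul ρ T f)]
  exact ((absolutelyContinuousOnInterval_exp_mul _ 0 T).fun_mul
    (hg.absolutelyContinuousOnInterval_intervalIntegral right_mem_uIcc)).neg

theorem IntervalIntegrable.ae_hasDerivAt_expConv (hf : IntervalIntegrable f volume 0 T) :
    ∀ᵐ t, t ∈ uIcc 0 T → HasDerivAt (expConv ρ f) (f t - ρ * expConv ρ f t) t := by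
  have hg : IntervalIntegrable (fun s => f s * exp (ρ * s)) volume 0 T :=
    hf.mul_continuousOn (by fun_prop)
  filter_upwards [hg.ae_hasDerivAt_integral] with t ht hmem
  rw [show expConv ρ f = _ from funext (expConv_eq_exp_mul ρ f)]
  have hexp : HasDerivAt (fun t => exp (-ρ * t)) (exp (-ρ * t) * -ρ) t := by
    simpa using ((hasDerivAt_id t).const_mul (-ρ)).exp
  refine (hexp.mul (ht hmem 0 left_mem_uIcc)).congr_deriv ?_
  have hinv : exp (-ρ * t) * exp (ρ * t) = 1 := by rw [← exp_add]; simp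
  beta_reduce
  linear_combination (f t) * hinv

theorem IntervalIntegrable.ae_hasDerivAt_expConvAdj (hf : IntervalIntegrable f volume 0 T) :
    ∀ᵐ s, s ∈ uIcc 0 T →
      HasDerivAt (expConvAdj ρ T f) (ρ * expConvAdj ρ T f s - f s) s := by
  have hg : IntervalIntegrable (fun t => f t * exp (-ρ * t)) volume 0 T :=
    hf.mul_continuousOn (by fun_prop)
  filter_upwards [hg.ae_hasDerivAt_integral] with s hs hmem
  rw [show expConvAdj ρ T f = _ from funext (expConvAdj_eq_exp_mul ρ T f)]
  have hexp : HasDerivAt (fun s => exp (ρ * s)) (exp (ρ * s) * ρ) s := by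
    simpa using ((hasDerivAt_id s).const_mul ρ).exp
  refine (hexp.mul (hs hmem T right_mem_uIcc)).neg.congr_deriv ?_
  have hinv : exp (ρ * s) * exp (-ρ * s) = 1 := by rw [← exp_add]; simp
  beta_reduce
  linear_combination (-f s) * hinv

theorem expConv_zero (ρ : ℝ) (f : ℝ → ℝ) : expConv ρ f 0 = 0 := integral_same

theorem expConvAdj_self (ρ T : ℝ) (f : ℝ → ℝ) : expConvAdj ρ T f T = 0 := integral_same

theorem IntervalIntegrable.continuousOn_expConv (hf : IntervalIntegrable f volume 0 T) :
    ContinuousOn (expConv ρ f) (uIcc 0 T) :=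
  hf.absolutelyContinuousOnInterval_expConv.continuousOn

theorem IntervalIntegrable.continuousOn_expConvAdj (hf : IntervalIntegrable f volume 0 T) :
    ContinuousOn (expConvAdj ρ T f) (uIcc 0 T) :=
  hf.absolutelyContinuousOnInterval_expConvAdj.continuousOn

theorem expConv_add {g : ℝ → ℝ} {t : ℝ} (hf : IntervalIntegrable f volume 0 t)
    (hg : IntervalIntegrable g volume 0 t) :
    expConv ρ (f + g) t = expConv ρ f t + expConv ρ g t := by
  simp only [expConv, Pi.add_apply, add_mul]
  exact integral_add (hf.mul_continuousOn (by fun_prop)) (hg.mul_continuousOn (by fun_prop))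

theorem integral_mul_expConv_eq_integral_expConvAdj_mul {g : ℝ → ℝ}
    (hf : IntervalIntegrable f volume 0 T) (hg : IntervalIntegrable g volume 0 T) :
    ∫ t in (0:ℝ)..T, f t * expConv ρ g t = ∫ t in (0:ℝ)..T, expConvAdj ρ T f t * g t := by
  have hparts := AbsolutelyContinuousOnInterval.integral_deriv_mul_eq_sub_of_ae_hasDerivAt
    (hf.absolutelyContinuousOnInterval_expConvAdj (ρ := ρ))
    (hg.absolutelyContinuousOnInterval_expConv (ρ := ρ))
    hf.ae_hasDerivAt_expConvAdj hg.ae_hasDerivAt_expConv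
  rw [expConvAdj_self, expConv_zero, zero_mul, mul_zero, sub_zero] at hparts
  have hfu : IntervalIntegrable (fun t => f t * expConv ρ g t) volume 0 T :=
    hf.mul_continuousOn hg.continuousOn_expConv
  have hug : IntervalIntegrable (fun t => expConvAdj ρ T f t * g t) volume 0 T :=
    hg.continuousOn_mul hf.continuousOn_expConvAdj
  have hdiff : ∫ t in (0:ℝ)..T, (expConvAdj ρ T f t * g t - f t * expConv ρ g t) = 0 := by
    refine Eq.trans (intervalIntegral.integral_congr fun t _ => ?_) hparts
    ring
  rw [integral_sub hug hfu] at hdiff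
  linarith

theorem integral_mul_expConv_self_nonneg (hρ : 0 ≤ ρ) (hT : 0 ≤ T)
    (hf : IntervalIntegrable f volume 0 T) :
    0 ≤ ∫ t in (0:ℝ)..T, f t * expConv ρ f t := by
  set u := expConv ρ f
  have hparts := AbsolutelyContinuousOnInterval.integral_deriv_mul_eq_sub_of_ae_hasDerivAt
    (hf.absolutelyContinuousOnInterval_expConv (ρ := ρ))
    (hf.absolutelyContinuousOnInterval_expConv (ρ := ρ))
    hf.ae_hasDerivAt_expConv hf.ae_hasDerivAt_expConv
  rw [expConv_zero, mul_zero, sub_zero] at hparts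
  have hfu : IntervalIntegrable (fun t => f t * u t) volume 0 T :=
    hf.mul_continuousOn hf.continuousOn_expConv
  have hu2 : IntervalIntegrable (fun t => u t ^ 2) volume 0 T :=
    (hf.continuousOn_expConv.pow 2).intervalIntegrable
  have hsplit : ∫ t in (0:ℝ)..T, ((f t - ρ * u t) * u t + u t * (f t - ρ * u t))
      = 2 * (∫ t in (0:ℝ)..T, f t * u t) - 2 * ρ * ∫ t in (0:ℝ)..T, u t ^ 2 := by
    rw [← intervalIntegral.integral_const_mul, ← intervalIntegral.integral_const_mul,
      ← integral_sub (hfu.const_mul 2) (hu2.const_mul _)]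
    refine integral_congr fun t _ => ?_
    ring
  have hu2_nonneg : 0 ≤ ∫ t in (0:ℝ)..T, u t ^ 2 :=
    integral_nonneg hT fun t _ => sq_nonneg _
  nlinarith [mul_self_nonneg (u T)]

end ExpConv

-- `expConv ρ a s + expConvAdj ρ T a s = ∫₀ᵀ a t e^{-ρ|t-s|} dt`: this is the `L²`-gradient of
-- `execCost` at `a` (see `execCost_add`).
noncomputable def costGradient (η γ ρ T : ℝ) (a : ℝ → ℝ) (s : ℝ) : ℝ :=
  2 * η * a s + γ * (expConv ρ a s + expConvAdj ρ T a s)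

noncomputable def execCost (η γ ρ T : ℝ) (ξ : ℝ → ℝ) : ℝ :=
  ∫ t in (0:ℝ)..T, (η * ξ t ^ 2 + γ * ξ t * expConv ρ ξ t)

theorem ContinuousOn.memLp_restrict_Icc {f : ℝ → ℝ} {a b : ℝ} {p : ENNReal}
    (hf : ContinuousOn f (Icc a b)) : MemLp f p (volume.restrict (Icc a b)) := by
  obtain ⟨M, hM⟩ := isCompact_Icc.exists_bound_of_continuousOn hf
  exact MemLp.of_bound (hf.aestronglyMeasurable measurableSet_Icc) M
    (ae_restrict_of_forall_mem measurableSet_Icc hM)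

theorem integral_sq_pos_of_not_ae_eq_zero {h : ℝ → ℝ} {a b : ℝ} (hab : a ≤ b)
    (hh2 : IntervalIntegrable (fun t => h t ^ 2) volume a b)
    (hh : ¬ h =ᵐ[volume.restrict (Icc a b)] 0) : 0 < ∫ t in a..b, h t ^ 2 := by
  rw [integral_of_le hab, ← integral_Icc_eq_integral_Ioc]
  refine (integral_nonneg fun t => sq_nonneg (h t)).lt_of_ne fun h0 => hh ?_
  have hint : IntegrableOn (fun t => h t ^ 2) (Icc a b) :=
    (intervalIntegrable_iff_integrableOn_Icc_of_le hab).1 hh2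
  filter_upwards [(integral_eq_zero_iff_of_nonneg (fun t => sq_nonneg (h t)) hint).1 h0.symm]
    with t ht
  exact pow_eq_zero_iff two_ne_zero |>.1 ht

section Cost

variable {η γ ρ T : ℝ} {a h : ℝ → ℝ}

theorem execCost_add (ha : ContinuousOn a (uIcc 0 T)) (hh : IntervalIntegrable h volume 0 T)
    (hh2 : IntervalIntegrable (fun t => h t ^ 2) volume 0 T) :
    execCost η γ ρ T (a + h) =
      execCost η γ ρ T a + (∫ t in (0:ℝ)..T, costGradient η γ ρ T a t * h t)
      + ∫ t in (0:ℝ)..T, (η * h t ^ 2 + γ * h t * expConv ρ h t) := by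
  have hai : IntervalIntegrable a volume 0 T := ha.intervalIntegrable
  have hua := hai.continuousOn_expConv (ρ := ρ)
  have huh := hh.continuousOn_expConv (ρ := ρ)
  have hva := hai.continuousOn_expConvAdj (ρ := ρ)
  have hsplit : execCost η γ ρ T (a + h) = ∫ t in (0:ℝ)..T,
      ((η * a t ^ 2 + γ * a t * expConv ρ a t) + costGradient η γ ρ T a t * h t
        + (η * h t ^ 2 + γ * h t * expConv ρ h t)
        + γ * (a t * expConv ρ h t - expConvAdj ρ T a t * h t)) := by
    refine intervalIntegral.integral_congr fun t ht => ?_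
    have hsub := uIcc_subset_uIcc_left ht
    simp only [costGradient, Pi.add_apply, expConv_add (hai.mono_set hsub) (hh.mono_set hsub)]
    ring
  have hcost_a : IntervalIntegrable (fun t => η * a t ^ 2 + γ * a t * expConv ρ a t) volume 0 T :=
    ContinuousOn.intervalIntegrable (by fun_prop)
  have hWh : IntervalIntegrable (fun t => costGradient η γ ρ T a t * h t) volume 0 T :=
    hh.continuousOn_mul (by unfold costGradient; fun_prop)
  have hQ : IntervalIntegrable (fun t => η * h t ^ 2 + γ * h t * expConv ρ h t) volume 0 T :=
    (hh2.const_mul η).add ((hh.const_mul γ).mul_continuousOn huh)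
  have hauh : IntervalIntegrable (fun t => a t * expConv ρ h t) volume 0 T :=
    ContinuousOn.intervalIntegrable (ha.mul huh)
  have hvah : IntervalIntegrable (fun t => expConvAdj ρ T a t * h t) volume 0 T :=
    hh.continuousOn_mul hva
  rw [hsplit, integral_add (((hcost_a.add hWh).add hQ)) ((hauh.sub hvah).const_mul γ),
    intervalIntegral.integral_const_mul, integral_sub hauh hvah,
    integral_mul_expConv_eq_integral_expConvAdj_mul hai hh, sub_self, mul_zero, add_zero,
    integral_add (hcost_a.add hWh) hQ, integral_add hcost_a hWh]
  rfl

theorem integral_sq_add_mul_expConv_pos (hη : 0 < η) (hγ : 0 ≤ γ) (hρ : 0 ≤ ρ) (hT : 0 ≤ T)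
    (hh : IntervalIntegrable h volume 0 T)
    (hh2 : IntervalIntegrable (fun t => h t ^ 2) volume 0 T)
    (hne : ¬ h =ᵐ[volume.restrict (Icc 0 T)] 0) :
    0 < ∫ t in (0:ℝ)..T, (η * h t ^ 2 + γ * h t * expConv ρ h t) := by
  have hhu : IntervalIntegrable (fun t => h t * expConv ρ h t) volume 0 T :=
    hh.mul_continuousOn hh.continuousOn_expConv
  simp only [mul_assoc γ]
  rw [integral_add (hh2.const_mul η) (hhu.const_mul γ), intervalIntegral.integral_const_mul,
    intervalIntegral.integral_const_mul]
  exact add_pos_of_pos_of_nonneg (mul_pos hη (integral_sq_pos_of_not_ae_eq_zero hT hh2 hne))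
    (mul_nonneg hγ (integral_mul_expConv_self_nonneg hρ hT hh))

theorem execCost_lt_of_costGradient_eq {ξ : ℝ → ℝ} {c : ℝ} (hη : 0 < η) (hγ : 0 ≤ γ)
    (hρ : 0 ≤ ρ) (ha : ContinuousOn a (Icc 0 T))
    (hW : ∀ s ∈ Icc 0 T, costGradient η γ ρ T a s = c)
    (hξ : MemLp ξ 2 (volume.restrict (Icc 0 T)))
    (hint : ∫ t in (0:ℝ)..T, ξ t = ∫ t in (0:ℝ)..T, a t)
    (hne : ¬ ξ =ᵐ[volume.restrict (Icc 0 T)] a) :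
    execCost η γ ρ T a < execCost η γ ρ T ξ := by
  have hT : 0 ≤ T := by
    by_contra hT
    rw [Icc_eq_empty (by linarith), Measure.restrict_empty] at hne
    exact hne (by simp [Filter.EventuallyEq])
  set h := ξ - a with h_def
  have hL2 : MemLp h 2 (volume.restrict (Icc 0 T)) := hξ.sub ha.memLp_restrict_Icc
  have hh : IntervalIntegrable h volume 0 T :=
    (intervalIntegrable_iff_integrableOn_Icc_of_le hT).2 (hL2.integrable one_le_two)
  have hh2 : IntervalIntegrable (fun t => h t ^ 2) volume 0 T :=
    (intervalIntegrable_iff_integrableOn_Icc_of_le hT).2 hL2.integrable_sq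
  have hne' : ¬ h =ᵐ[volume.restrict (Icc 0 T)] 0 := fun h0 => hne <| by
    filter_upwards [h0] with t ht
    exact sub_eq_zero.1 ht
  rw [← uIcc_of_le hT] at ha hW
  have hcross : ∫ t in (0:ℝ)..T, costGradient η γ ρ T a t * h t = 0 := by
    have hai : IntervalIntegrable a volume 0 T := ha.intervalIntegrable
    have hξi : IntervalIntegrable ξ volume 0 T := by simpa [h_def] using hh.add hai
    rw [intervalIntegral.integral_congr fun t ht => by rw [hW t ht],
      intervalIntegral.integral_const_mul, h_def]
    simp only [Pi.sub_apply]
    rw [integral_sub hξi hai, hint, sub_self, mul_zero]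
  have hquad := integral_sq_add_mul_expConv_pos hη hγ hρ hT hh hh2 hne'
  calc execCost η γ ρ T a
      < execCost η γ ρ T a + (∫ t in (0:ℝ)..T, costGradient η γ ρ T a t * h t)
        + ∫ t in (0:ℝ)..T, (η * h t ^ 2 + γ * h t * expConv ρ h t) := by linarith
    _ = execCost η γ ρ T ξ := by rw [← execCost_add ha hh hh2, add_sub_cancel]

end Cost

theorem hasDerivAt_exp_mul_cosh_primitive {σ k m α β : ℝ} (hσ : σ ≠ 0) (hσk : σ ^ 2 ≠ k ^ 2)
    (u : ℝ) :
    HasDerivAt (fun u => exp (σ * u) * (α / σ +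
        β * (σ * cosh (k * (u - m)) - k * sinh (k * (u - m))) / (σ ^ 2 - k ^ 2)))
      ((α + β * cosh (k * (u - m))) * exp (σ * u)) u := by
  have hlin : HasDerivAt (fun u => k * (u - m)) k u := by
    simpa using ((hasDerivAt_id u).sub_const m).const_mul k
  have hexp : HasDerivAt (fun u => exp (σ * u)) (exp (σ * u) * σ) u := by
    simpa using ((hasDerivAt_id u).const_mul σ).exp
  refine (hexp.mul ((((hlin.cosh.const_mul σ).sub (hlin.sinh.const_mul k)).const_mul β).div_const
    _ |>.const_add _)).congr_deriv ?_
  have : σ ^ 2 - k ^ 2 ≠ 0 := sub_ne_zero.2 hσk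
  simp only [Pi.sub_apply]
  field_simp
  ring

theorem costGradient_const_add_cosh {η γ ρ T k α β : ℝ} (hρ : ρ ≠ 0) (hρk : ρ ^ 2 ≠ k ^ 2)
    (hηk : η * (k ^ 2 - ρ ^ 2) = γ * ρ)
    (hα : α * (k ^ 2 - ρ ^ 2) = β * ρ * (ρ * cosh (k * T / 2) + k * sinh (k * T / 2)))
    (s : ℝ) :
    costGradient η γ ρ T (fun t => α + β * cosh (k * (t - T / 2))) s = 2 * α * (η + γ / ρ) := by
  set f : ℝ → ℝ := fun t => α + β * cosh (k * (t - T / 2))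
  set E : ℝ → ℝ → ℝ := fun σ u => α / σ +
    β * (σ * cosh (k * (u - T / 2)) - k * sinh (k * (u - T / 2))) / (σ ^ 2 - k ^ 2) with hE
  have hftc : ∀ σ, σ ≠ 0 → σ ^ 2 ≠ k ^ 2 → ∀ a b : ℝ,
      ∫ u in a..b, f u * exp (σ * u) = exp (σ * b) * E σ b - exp (σ * a) * E σ a :=
    fun σ hσ hσk a b => integral_eq_sub_of_hasDerivAt
      (fun u _ => hasDerivAt_exp_mul_cosh_primitive hσ hσk u)
      ((by fun_prop : Continuous fun u => f u * exp (σ * u)).intervalIntegrable a b)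
  have hρk' : (-ρ) ^ 2 ≠ k ^ 2 := by rwa [neg_sq]
  have hk : ρ ^ 2 - k ^ 2 ≠ 0 := sub_ne_zero.2 hρk
  have hE0 : E ρ 0 = 0 := by
    simp only [hE, zero_sub, show k * -(T / 2) = -(k * T / 2) by ring, cosh_neg, sinh_neg]
    field_simp
    linear_combination -hα
  have hET : E (-ρ) T = 0 := by
    simp only [hE, show k * (T - T / 2) = k * T / 2 by ring, neg_sq]
    field_simp
    linear_combination hα
  have hconv : expConv ρ f s = E ρ s := by
    rw [expConv_eq_exp_mul, hftc ρ hρ hρk, hE0, mul_zero, sub_zero, ← mul_assoc, ← exp_add]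
    simp
  have hadj : expConvAdj ρ T f s = -E (-ρ) s := by
    rw [expConvAdj_eq_exp_mul, hftc (-ρ) (neg_ne_zero.2 hρ) hρk', hET, mul_zero, sub_zero,
      ← mul_assoc, ← exp_add]
    simp
  rw [costGradient, hconv, hadj]
  simp only [hE, f]
  generalize cosh (k * (s - T / 2)) = c
  field_simp
  linear_combination (-2 * β * c * ρ) * hηk

theorem integral_const_add_cosh (α β k T : ℝ) (hk : k ≠ 0) :
    ∫ t in (0:ℝ)..T, (α + β * cosh (k * (t - T / 2))) = α * T + 2 * β * sinh (k * T / 2) / k := by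
  have hderiv : ∀ t ∈ uIcc 0 T, HasDerivAt (fun t => α * t + β * sinh (k * (t - T / 2)) / k)
      (α + β * cosh (k * (t - T / 2))) t := by
    intro t _
    have hlin : HasDerivAt (fun t => k * (t - T / 2)) k t := by
      simpa using ((hasDerivAt_id t).sub_const (T / 2)).const_mul k
    refine (((hasDerivAt_id t).const_mul α).add
      ((hlin.sinh.const_mul β).div_const k)).congr_deriv ?_
    field_simp
  rw [integral_eq_sub_of_hasDerivAt hderiv
    ((by fun_prop : Continuous fun t => α + β * cosh (k * (t - T / 2))).intervalIntegrable 0 T),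
    show k * (T - T / 2) = k * T / 2 by ring, show k * (0 - T / 2) = -(k * T / 2) by ring,
    sinh_neg]
  ring

noncomputable def optimalStrategy (η γ ρ T k x D t : ℝ) : ℝ :=
  k * x * ((k ^ 2 * η - γ * ρ) * (ρ * cosh (k * T / 2) + k * sinh (k * T / 2)) +
    γ * ρ ^ 2 * cosh (k * (t - T / 2))) / D

section OptimalStrategy

variable {η γ ρ T k x D : ℝ}

theorem optimalStrategy_eq_const_add_cosh :
    optimalStrategy η γ ρ T k x D = fun t =>
      k * x * ((k ^ 2 * η - γ * ρ) * (ρ * cosh (k * T / 2) + k * sinh (k * T / 2))) / D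
        + k * x * (γ * ρ ^ 2) / D * cosh (k * (t - T / 2)) := by
  funext t
  rw [optimalStrategy]
  ring

theorem continuous_optimalStrategy : Continuous (optimalStrategy η γ ρ T k x D) := by
  rw [optimalStrategy_eq_const_add_cosh]
  fun_prop

theorem integral_optimalStrategy (hk : k ≠ 0) (hD0 : D ≠ 0)
    (hD : D = k * ρ * T * cosh (k * T / 2) * (k ^ 2 * η - γ * ρ) +
      sinh (k * T / 2) * (γ * ρ * (2 * ρ - k ^ 2 * T) + k ^ 4 * η * T)) :
    ∫ t in (0:ℝ)..T, optimalStrategy η γ ρ T k x D t = x := by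
  rw [optimalStrategy_eq_const_add_cosh, integral_const_add_cosh _ _ k T hk]
  field_simp
  rw [hD]
  ring

theorem costGradient_optimalStrategy (hρ : ρ ≠ 0) (hρk : ρ ^ 2 ≠ k ^ 2)
    (hkρ : η * (k ^ 2 - ρ ^ 2) = γ * ρ) (s : ℝ) :
    costGradient η γ ρ T (optimalStrategy η γ ρ T k x D) s =
      costGradient η γ ρ T (optimalStrategy η γ ρ T k x D) 0 := by
  have hα : k * x * ((k ^ 2 * η - γ * ρ) * (ρ * cosh (k * T / 2) + k * sinh (k * T / 2))) / D
      * (k ^ 2 - ρ ^ 2) =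
      k * x * (γ * ρ ^ 2) / D * ρ * (ρ * cosh (k * T / 2) + k * sinh (k * T / 2)) := by
    linear_combination (k ^ 3 * x * (ρ * cosh (k * T / 2) + k * sinh (k * T / 2)) / D) * hkρ
  simp only [optimalStrategy_eq_const_add_cosh, costGradient_const_add_cosh hρ hρk hkρ hα]

theorem optimalStrategy_denominator_pos (hT : 0 < T) (hη : 0 < η) (hγ : 0 ≤ γ) (hρ : 0 < ρ)
    (hk : 0 < k) (hkρ : η * (k ^ 2 - ρ ^ 2) = γ * ρ) :
    0 < k * ρ * T * cosh (k * T / 2) * (k ^ 2 * η - γ * ρ) +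
      sinh (k * T / 2) * (γ * ρ * (2 * ρ - k ^ 2 * T) + k ^ 4 * η * T) := by
  have hsinh : 0 < sinh (k * T / 2) := sinh_pos_iff.2 (by positivity)
  have hcosh := cosh_pos (k * T / 2)
  rw [show k * ρ * T * cosh (k * T / 2) * (k ^ 2 * η - γ * ρ) +
      sinh (k * T / 2) * (γ * ρ * (2 * ρ - k ^ 2 * T) + k ^ 4 * η * T)
      = η * ρ ^ 2 * (k * ρ * T * cosh (k * T / 2) + k ^ 2 * T * sinh (k * T / 2))
        + 2 * γ * ρ ^ 2 * sinh (k * T / 2) by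
    linear_combination (k * ρ * T * cosh (k * T / 2) + k ^ 2 * T * sinh (k * T / 2)) * hkρ]
  positivity

end OptimalStrategy

theorem stmt_0_general (T x η γ ρ : ℝ) (hT : 0 < T) (hη : 0 < η) (hγ : 0 < γ)
    (hρ : 0 < ρ) (k D : ℝ) (hk : k = Real.sqrt (ρ * (ρ + γ / η)))
    (hD : D = k * ρ * T * Real.cosh (k * T / 2) * (k ^ 2 * η - γ * ρ) +
      Real.sinh (k * T / 2) * (γ * ρ * (2 * ρ - k ^ 2 * T) + k ^ 4 * η * T))
    (ξstar : ℝ → ℝ)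
    (hξstar : ∀ t : ℝ, ξstar t = k * x * ((k ^ 2 * η - γ * ρ) *
      (ρ * Real.cosh (k * T / 2) + k * Real.sinh (k * T / 2)) +
      γ * ρ ^ 2 * Real.cosh (k * (t - T / 2))) / D)
    (C : (ℝ → ℝ) → ℝ)
    (hC : ∀ ξ : ℝ → ℝ, C ξ = ∫ t in (0:ℝ)..T,
      (η * (ξ t) ^ 2 + γ * ξ t * ∫ s in (0:ℝ)..t, ξ s * Real.exp (-ρ * (t - s)))) :
    (MemLp ξstar 2 (volume.restrict (Icc 0 T)) ∧ (∫ t in (0:ℝ)..T, ξstar t) = x) ∧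
    (∀ ξ : ℝ → ℝ, MemLp ξ 2 (volume.restrict (Icc 0 T)) → (∫ t in (0:ℝ)..T, ξ t) = x →
      ¬ (ξ =ᵐ[volume.restrict (Icc 0 T)] ξstar) → C ξstar < C ξ) := by
  have hkρ : η * (k ^ 2 - ρ ^ 2) = γ * ρ := by
    rw [hk, sq_sqrt (by positivity)]
    field_simp
    ring
  have hkpos : 0 < k := hk ▸ sqrt_pos.2 (by positivity)
  have hρk : ρ ^ 2 < k ^ 2 := by nlinarith [mul_pos hγ hρ]
  have hDpos : 0 < D := hD ▸ optimalStrategy_denominator_pos hT hη hγ.le hρ hkpos hkρ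
  obtain rfl : ξstar = optimalStrategy η γ ρ T k x D := funext hξstar
  have hint := integral_optimalStrategy hkpos.ne' hDpos.ne' hD (x := x)
  refine ⟨⟨continuous_optimalStrategy.continuousOn.memLp_restrict_Icc, hint⟩,
    fun ξ hξ hξint hne => ?_⟩
  rw [show C = execCost η γ ρ T from funext hC]
  exact execCost_lt_of_costGradient_eq hη hγ.le hρ.le continuous_optimalStrategy.continuousOn
    (fun s _ => costGradient_optimalStrategy hρ.ne' hρk.ne hkρ s) hξ (hξint.trans hint.symm) hne

/-- The strategy `ξ*` is admissible (square-integrable with `∫₀ᵀ ξ* = x`) and is the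
unique minimizer of the execution-cost functional `C` over all admissible strategies. -/
theorem stmt_0 (T x η γ ρ : ℝ) (hT : 0 < T) (hx : 0 < x) (hη : 0 < η) (hγ : 0 < γ)
    (hρ : 0 < ρ) (k D : ℝ) (hk : k = Real.sqrt (ρ * (ρ + γ / η)))
    (hD : D = k * ρ * T * Real.cosh (k * T / 2) * (k ^ 2 * η - γ * ρ) +
      Real.sinh (k * T / 2) * (γ * ρ * (2 * ρ - k ^ 2 * T) + k ^ 4 * η * T))
    (ξstar : ℝ → ℝ)
    (hξstar : ∀ t : ℝ, ξstar t = k * x * ((k ^ 2 * η - γ * ρ) *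
      (ρ * Real.cosh (k * T / 2) + k * Real.sinh (k * T / 2)) +
      γ * ρ ^ 2 * Real.cosh (k * (t - T / 2))) / D)
    (C : (ℝ → ℝ) → ℝ)
    (hC : ∀ ξ : ℝ → ℝ, C ξ = ∫ t in (0:ℝ)..T,
      (η * (ξ t) ^ 2 + γ * ξ t * ∫ s in (0:ℝ)..t, ξ s * Real.exp (-ρ * (t - s)))) :
    (MemLp ξstar 2 (volume.restrict (Icc 0 T)) ∧ (∫ t in (0:ℝ)..T, ξstar t) = x) ∧
    (∀ ξ : ℝ → ℝ, MemLp ξ 2 (volume.restrict (Icc 0 T)) → (∫ t in (0:ℝ)..T, ξ t) = x →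
      ¬ (ξ =ᵐ[volume.restrict (Icc 0 T)] ξstar) → C ξstar < C ξ) :=
  stmt_0_general T x η γ ρ hT hη hγ hρ k D hk hD ξstar hξstar C hC
end

section
/- The denominator of the optimal strategy is strictly positive: D := kρT cosh(kT/2)(k²η − γρ) + sinh(kT/2)(γρ(2ρ − k²T) + k⁴ηT) > 0, so the formula for ξ* is well defined. -/
/-! With `k² η = ρ (ρ η + γ)`, the coefficient `k² η - γ ρ` of the `cosh` term equals `ρ² η` and the
coefficient of the `sinh` term equals `2 γ ρ² + k² T ρ² η`, so both terms are positive. -/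

lemma sq_mul_of_eq_sqrt {η γ ρ k : ℝ} (hη : 0 < η) (hγ : 0 < γ) (hρ : 0 < ρ)
    (hk : k = Real.sqrt (ρ * (ρ + γ / η))) : k ^ 2 * η = ρ * (ρ * η + γ) := by
  rw [hk, Real.sq_sqrt (by positivity)]
  field_simp

lemma denominator_pos {T η γ ρ k : ℝ} (hT : 0 < T) (hη : 0 < η) (hγ : 0 < γ) (hρ : 0 < ρ)
    (hk₀ : 0 < k) (hk : k ^ 2 * η = ρ * (ρ * η + γ)) :
    0 < k * ρ * T * Real.cosh (k * T / 2) * (k ^ 2 * η - γ * ρ) +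
      Real.sinh (k * T / 2) * (γ * ρ * (2 * ρ - k ^ 2 * T) + k ^ 4 * η * T) := by
  have hcosh_coeff : k ^ 2 * η - γ * ρ = ρ ^ 2 * η := by linear_combination hk
  have hsinh_coeff : γ * ρ * (2 * ρ - k ^ 2 * T) + k ^ 4 * η * T
      = 2 * γ * ρ ^ 2 + k ^ 2 * T * ρ ^ 2 * η := by linear_combination k ^ 2 * T * hk
  have hsinh : 0 < Real.sinh (k * T / 2) := Real.sinh_pos_iff.mpr (by positivity)
  rw [hcosh_coeff, hsinh_coeff]
  positivity

theorem stmt_1_general (T η γ ρ : ℝ) (hT : 0 < T) (hη : 0 < η) (hγ : 0 < γ)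
    (hρ : 0 < ρ) (k : ℝ) (hk : k = Real.sqrt (ρ * (ρ + γ / η))) :
    0 < k * ρ * T * Real.cosh (k * T / 2) * (k ^ 2 * η - γ * ρ) +
      Real.sinh (k * T / 2) * (γ * ρ * (2 * ρ - k ^ 2 * T) + k ^ 4 * η * T) := by
  have hk₀ : 0 < k := hk ▸ Real.sqrt_pos.mpr (by positivity)
  exact denominator_pos hT hη hγ hρ hk₀ (sq_mul_of_eq_sqrt hη hγ hρ hk)

/-- The denominator `D` of the optimal strategy is strictly positive, so the formula
for `ξ*` is well defined. -/
theorem stmt_1 (T x η γ ρ : ℝ) (hT : 0 < T) (hx : 0 < x) (hη : 0 < η) (hγ : 0 < γ)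
    (hρ : 0 < ρ) (k : ℝ) (hk : k = Real.sqrt (ρ * (ρ + γ / η))) :
    0 < k * ρ * T * Real.cosh (k * T / 2) * (k ^ 2 * η - γ * ρ) +
      Real.sinh (k * T / 2) * (γ * ρ * (2 * ρ - k ^ 2 * T) + k ^ 4 * η * T) :=
  stmt_1_general T η γ ρ hT hη hγ hρ k hk
end

section
/- The optimal trading strategy is always positive: ξ*(t) > 0 for every t ∈ [0,T]. In particular, when liquidating a single stock it is never optimal to buy the stock at any point in time within this modelling framework. -/
/-- The optimal trading strategy is always positive: `ξ*(t) > 0` for every `t ∈ [0,T]`. -/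
theorem stmt_2 (T x η γ ρ : ℝ) (hT : 0 < T) (hx : 0 < x) (hη : 0 < η) (hγ : 0 < γ)
    (hρ : 0 < ρ) (k D : ℝ) (hk : k = Real.sqrt (ρ * (ρ + γ / η)))
    (hD : D = k * ρ * T * Real.cosh (k * T / 2) * (k ^ 2 * η - γ * ρ) +
      Real.sinh (k * T / 2) * (γ * ρ * (2 * ρ - k ^ 2 * T) + k ^ 4 * η * T))
    (ξstar : ℝ → ℝ)
    (hξstar : ∀ t : ℝ, ξstar t = k * x * ((k ^ 2 * η - γ * ρ) *
      (ρ * Real.cosh (k * T / 2) + k * Real.sinh (k * T / 2)) +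
      γ * ρ ^ 2 * Real.cosh (k * (t - T / 2))) / D) :
    ∀ t ∈ Set.Icc (0:ℝ) T, 0 < ξstar t := by
  intro t ht
  have hkpos : 0 < k := by
    rw [hk]; apply Real.sqrt_pos.mpr; positivity
  have hk2 : k ^ 2 = ρ * (ρ + γ / η) := by
    rw [hk, sq, Real.mul_self_sqrt (by positivity)]
  have hkey : k ^ 2 * η - γ * ρ = ρ ^ 2 * η := by
    rw [hk2]; field_simp; ring
  have hcosh1 : 0 < Real.cosh (k * T / 2) := (Real.cosh_pos _)
  have hsinh : 0 < Real.sinh (k * T / 2) := by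
    have : 0 < k * T / 2 := by positivity
    exact Real.sinh_pos_iff.mpr this
  have hD2 : D = k * ρ ^ 3 * η * T * Real.cosh (k * T / 2) +
      Real.sinh (k * T / 2) * (2 * γ * ρ ^ 2 + k ^ 2 * ρ ^ 2 * η * T) := by
    rw [hD]
    linear_combination (k * ρ * T * Real.cosh (k * T / 2) +
      Real.sinh (k * T / 2) * k ^ 2 * T) * hkey
  have hDpos : 0 < D := by
    rw [hD2]
    have h1 : 0 < k * ρ ^ 3 * η * T * Real.cosh (k * T / 2) := by positivity
    have h2 : 0 < Real.sinh (k * T / 2) * (2 * γ * ρ ^ 2 + k ^ 2 * ρ ^ 2 * η * T) :=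
      mul_pos hsinh (by positivity)
    linarith
  rw [hξstar t, hkey]
  apply div_pos _ hDpos
  have hcosh2 : 0 < Real.cosh (k * (t - T / 2)) := (Real.cosh_pos _)
  have hs : (0:ℝ) < ρ ^ 2 * η * (ρ * Real.cosh (k * T / 2) + k * Real.sinh (k * T / 2)) +
      γ * ρ ^ 2 * Real.cosh (k * (t - T / 2)) := by
    have : 0 < ρ * Real.cosh (k * T / 2) + k * Real.sinh (k * T / 2) := by
      have := mul_pos hρ hcosh1
      have := mul_pos hkpos hsinh
      linarith
    have h3 : 0 < γ * ρ ^ 2 * Real.cosh (k * (t - T / 2)) := by positivity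
    nlinarith [mul_pos (mul_pos (pow_pos hρ 2) hη) this]
  exact mul_pos (mul_pos hkpos hx) hs
end

section
/- Fix t ∈ (0,T] and fix η, ρ, T, x. Regarding the optimal portfolio X*(t) as a function of the temporary impact parameter γ (through k, a, b, c), one has, as γ → ∞ (equivalently as the ratio γ/η → ∞), X*(t) → x − (x/(ρT + 2))·(H₀(t) + ρt + H_T(t)), where H_a denotes the Heaviside function H_a(s) = 1 if s ≥ a and 0 otherwise; explicitly, the limit equals x − x(1 + ρt)/(ρT + 2) for 0 < t < T and equals 0 for t = T. -/
/-!
Dividing numerator and denominator of `X*(t)` by `c · sinh (kT/2)` gives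
`X*(t) = x - x (1 + t R + S) / (2 + T R)` with `R = ρ (k/c) coth (kT/2) + k²/c` and
`S = sinh (k (t - T/2)) / sinh (kT/2)`. As `γ → ∞` we have `c → ∞`, `k → ∞`,
`k/c → 0` and `k²/c → ρ`, so `R → ρ`, while `S → 0` for `0 < t < T` because `|t - T/2| < T/2`.
At `t = T` the numerator equals the denominator, so `X*(T) = 0` for every `γ > 0`.
-/

open Filter Real Topology

namespace Real

lemma sinh_eq_exp_mul (p q : ℝ) : sinh p = exp q * (exp (p - q) - exp (-p - q)) / 2 := by
  rw [sinh_eq, mul_sub, ← exp_add, ← exp_add]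
  ring_nf

lemma cosh_eq_exp_mul (p q : ℝ) : cosh p = exp q * (exp (p - q) + exp (-p - q)) / 2 := by
  rw [cosh_eq, mul_add, ← exp_add, ← exp_add]
  ring_nf

lemma tendsto_exp_mul_atTop_nhds_zero {r : ℝ} (hr : r < 0) :
    Tendsto (fun y => exp (y * r)) atTop (𝓝 0) :=
  tendsto_exp_comp_nhds_zero.2 (tendsto_id.atTop_mul_const_of_neg hr)

lemma tendsto_cosh_div_sinh_atTop : Tendsto (fun y => cosh y / sinh y) atTop (𝓝 1) := by
  have h := tendsto_exp_mul_atTop_nhds_zero (r := -2) (by norm_num)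
  have h' := (h.const_add 1).div (h.const_sub 1) (by norm_num)
  rw [add_zero, sub_zero, div_one] at h'
  refine h'.congr fun y => ?_
  rw [Pi.div_apply, cosh_eq_exp_mul y y, sinh_eq_exp_mul y y, sub_self, exp_zero,
    div_div_div_cancel_right₀ two_ne_zero, mul_div_mul_left _ _ (exp_pos _).ne']
  ring_nf

lemma tendsto_sinh_mul_div_sinh_mul_atTop {d β : ℝ} (hd : |d| < β) :
    Tendsto (fun y => sinh (y * d) / sinh (y * β)) atTop (𝓝 0) := by
  obtain ⟨hd₁, hd₂⟩ := abs_lt.1 hd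
  have hnum := (tendsto_exp_mul_atTop_nhds_zero (r := d - β) (by linarith)).sub
    (tendsto_exp_mul_atTop_nhds_zero (r := -d - β) (by linarith))
  have hden := (tendsto_exp_mul_atTop_nhds_zero (r := -2 * β) (by linarith)).const_sub 1
  have h := hnum.div hden (by norm_num)
  rw [sub_self, zero_div] at h
  refine h.congr fun y => ?_
  rw [Pi.div_apply, sinh_eq_exp_mul (y * d) (y * β), sinh_eq_exp_mul (y * β) (y * β), sub_self,
    exp_zero, div_div_div_cancel_right₀ two_ne_zero, mul_div_mul_left _ _ (exp_pos _).ne']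
  ring_nf

end Real

section
variable {ρ T : ℝ}

lemma tendsto_sqrt_mul_add_atTop (hρ : 0 < ρ) :
    Tendsto (fun c => √(ρ * (ρ + c))) atTop atTop :=
  tendsto_sqrt_atTop.comp ((tendsto_atTop_add_const_left _ ρ tendsto_id).const_mul_atTop hρ)

lemma tendsto_sq_sqrt_mul_add_div_atTop (hρ : 0 ≤ ρ) :
    Tendsto (fun c => √(ρ * (ρ + c)) ^ 2 / c) atTop (𝓝 ρ) := by
  have h := (tendsto_inv_atTop_zero.const_mul (ρ ^ 2)).const_add ρ
  rw [mul_zero, add_zero] at h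
  refine h.congr' ?_
  filter_upwards [eventually_gt_atTop 0] with c hc
  rw [sq_sqrt (by positivity)]
  field_simp
  ring

lemma tendsto_sqrt_mul_add_div_atTop (hρ : 0 ≤ ρ) :
    Tendsto (fun c => √(ρ * (ρ + c)) / c) atTop (𝓝 0) := by
  have h := ((tendsto_sq_sqrt_mul_add_div_atTop hρ).mul tendsto_inv_atTop_zero).sqrt
  rw [mul_zero, sqrt_zero] at h
  refine h.congr' ?_
  filter_upwards [eventually_gt_atTop 0] with c hc
  rw [← div_eq_mul_inv, div_div, ← sq, ← div_pow, sqrt_sq (by positivity)]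

/-- The optimal portfolio `X*(t)`, which depends on `γ` and `η` only through `c = γ / η`. -/
noncomputable def optimalPortfolio (ρ T x c t : ℝ) : ℝ :=
  let k := √(ρ * (ρ + c))
  let a := sinh (k * T / 2) * c
  let b := k * ρ * cosh (k * T / 2) + k ^ 2 * sinh (k * T / 2)
  x - x * (a + b * t + c * sinh (k * (t - T / 2))) / (2 * a + b * T)

lemma optimalPortfolio_self (hρ : 0 < ρ) (hT : 0 < T) (x : ℝ) {c : ℝ} (hc : 0 < c) :
    optimalPortfolio ρ T x c T = 0 := by
  have hk : 0 < √(ρ * (ρ + c)) := sqrt_pos.2 (by positivity)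
  have hs : 0 < sinh (√(ρ * (ρ + c)) * T / 2) := sinh_pos_iff.2 (by positivity)
  simp only [optimalPortfolio, show T - T / 2 = T / 2 by ring, ← mul_div_assoc]
  rw [sub_eq_zero, eq_comm, mul_div_assoc, (div_eq_one_iff_eq (by positivity)).2 (by ring),
    mul_one]

lemma tendsto_optimalPortfolio_of_lt (hρ : 0 < ρ) (x : ℝ) {t : ℝ} (ht₀ : 0 < t)
    (htT : t < T) :
    Tendsto (fun c => optimalPortfolio ρ T x c t) atTop
      (𝓝 (x - x * (1 + ρ * t) / (ρ * T + 2))) := by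
  have hT : 0 < T := ht₀.trans htT
  set k : ℝ → ℝ := fun c => √(ρ * (ρ + c))
  set R : ℝ → ℝ := fun c =>
    ρ * (k c / c) * (cosh (k c * T / 2) / sinh (k c * T / 2)) + k c ^ 2 / c
  set S : ℝ → ℝ := fun c => sinh (k c * (t - T / 2)) / sinh (k c * (T / 2))
  have hk_top : Tendsto k atTop atTop := tendsto_sqrt_mul_add_atTop hρ
  have hR : Tendsto R atTop (𝓝 ρ) := by
    have hcoth := tendsto_cosh_div_sinh_atTop.comp
      ((hk_top.atTop_mul_const hT).atTop_div_const two_pos)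
    simpa using (((tendsto_sqrt_mul_add_div_atTop hρ.le).const_mul ρ).mul hcoth).add
      (tendsto_sq_sqrt_mul_add_div_atTop hρ.le)
  have hS : Tendsto S atTop (𝓝 0) :=
    (tendsto_sinh_mul_div_sinh_mul_atTop (abs_lt.2 ⟨by linarith, by linarith⟩)).comp hk_top
  have hlim := ((((hR.const_mul t).const_add 1).add hS).div ((hR.const_mul T).const_add 2)
    (by positivity)).const_mul x |>.const_sub x
  have heq : ∀ c > 0,
      optimalPortfolio ρ T x c t = x - x * ((1 + t * R c + S c) / (2 + T * R c)) := by
    intro c hc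
    have hk : 0 < √(ρ * (ρ + c)) := sqrt_pos.2 (by positivity)
    have hs : 0 < sinh (√(ρ * (ρ + c)) * T / 2) := sinh_pos_iff.2 (by positivity)
    simp only [optimalPortfolio, R, S, k, ← mul_div_assoc]
    field_simp
  rw [add_zero, mul_comm t, mul_comm T, add_comm 2, ← mul_div_assoc] at hlim
  exact hlim.congr' ((eventually_gt_atTop 0).mono fun c hc => (heq c hc).symm)

end

theorem stmt_6_general (T x η ρ t : ℝ) (hη : 0 < η) (hρ : 0 < ρ)
    (ht0 : 0 < t) (htT : t ≤ T)
    (k a b c Xstar : ℝ → ℝ)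
    (hk : ∀ γ : ℝ, k γ = Real.sqrt (ρ * (ρ + γ / η)))
    (ha : ∀ γ : ℝ, a γ = Real.sinh (k γ * T / 2) * (γ / η))
    (hb : ∀ γ : ℝ, b γ = k γ * ρ * Real.cosh (k γ * T / 2) +
      (k γ) ^ 2 * Real.sinh (k γ * T / 2))
    (hc : ∀ γ : ℝ, c γ = γ / η)
    (hXstar : ∀ γ : ℝ, Xstar γ =
      x - x * (a γ + b γ * t + c γ * Real.sinh (k γ * (t - T / 2))) / (2 * a γ + b γ * T))
    (H : ℝ → ℝ → ℝ) (hH : ∀ (a₀ s : ℝ), H a₀ s = if a₀ ≤ s then 1 else 0) :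
    Filter.Tendsto Xstar Filter.atTop
      (nhds (x - x / (ρ * T + 2) * (H 0 t + ρ * t + H T t))) ∧
    (t < T → x - x / (ρ * T + 2) * (H 0 t + ρ * t + H T t) =
      x - x * (1 + ρ * t) / (ρ * T + 2)) ∧
    (t = T → x - x / (ρ * T + 2) * (H 0 t + ρ * t + H T t) = 0) := by
  have hXstar_eq : Xstar = fun γ => optimalPortfolio ρ T x (γ / η) t := by
    ext γ
    simp only [hXstar, ha, hb, hc, hk, optimalPortfolio]
  have hγη : Tendsto (fun γ => γ / η) atTop atTop := tendsto_id.atTop_div_const hη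
  have hH0 : H 0 t = 1 := by simp [hH, ht0.le]
  rcases htT.lt_or_eq with hlt | rfl
  · have hval : x - x / (ρ * T + 2) * (H 0 t + ρ * t + H T t) =
        x - x * (1 + ρ * t) / (ρ * T + 2) := by
      rw [hH0, hH, if_neg hlt.not_ge, add_zero, div_mul_eq_mul_div]
    refine ⟨?_, fun _ => hval, fun h => absurd h hlt.ne⟩
    rw [hXstar_eq, hval]
    exact (tendsto_optimalPortfolio_of_lt hρ x ht0 hlt).comp hγη
  · have hval : x - x / (ρ * t + 2) * (H 0 t + ρ * t + H t t) = 0 := by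
      rw [hH0, hH, if_pos le_rfl]
      field_simp
      ring
    refine ⟨?_, fun h => absurd h (lt_irrefl t), fun _ => hval⟩
    rw [hXstar_eq, hval]
    exact tendsto_const_nhds.congr' <| (hγη.eventually_gt_atTop 0).mono fun γ hγ =>
      (optimalPortfolio_self hρ ht0 x hγ).symm

/-- As `γ → ∞` (equivalently `γ/η → ∞`), the optimal portfolio `X*(t)` converges to
`x - (x/(ρT+2))·(H₀(t) + ρt + H_T(t))` for `t ∈ (0,T]`, where `H_a` is the Heaviside
function; explicitly the limit is `x - x(1+ρt)/(ρT+2)` for `0 < t < T` and `0` for `t = T`. -/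
theorem stmt_6 (T x η ρ t : ℝ) (hT : 0 < T) (hx : 0 < x) (hη : 0 < η) (hρ : 0 < ρ)
    (ht0 : 0 < t) (htT : t ≤ T)
    (k a b c Xstar : ℝ → ℝ)
    (hk : ∀ γ : ℝ, k γ = Real.sqrt (ρ * (ρ + γ / η)))
    (ha : ∀ γ : ℝ, a γ = Real.sinh (k γ * T / 2) * (γ / η))
    (hb : ∀ γ : ℝ, b γ = k γ * ρ * Real.cosh (k γ * T / 2) +
      (k γ) ^ 2 * Real.sinh (k γ * T / 2))
    (hc : ∀ γ : ℝ, c γ = γ / η)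
    (hXstar : ∀ γ : ℝ, Xstar γ =
      x - x * (a γ + b γ * t + c γ * Real.sinh (k γ * (t - T / 2))) / (2 * a γ + b γ * T))
    (H : ℝ → ℝ → ℝ) (hH : ∀ (a₀ s : ℝ), H a₀ s = if a₀ ≤ s then 1 else 0) :
    Filter.Tendsto Xstar Filter.atTop
      (nhds (x - x / (ρ * T + 2) * (H 0 t + ρ * t + H T t))) ∧
    (t < T → x - x / (ρ * T + 2) * (H 0 t + ρ * t + H T t) =
      x - x * (1 + ρ * t) / (ρ * T + 2)) ∧
    (t = T → x - x / (ρ * T + 2) * (H 0 t + ρ * t + H T t) = 0) :=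
  stmt_6_general T x η ρ t hη hρ ht0 htT k a b c Xstar hk ha hb hc hXstar H hH
end

section
/- Let X : [0,T] → ℝ be absolutely continuous with square-integrable derivative X', and let v : [0,T] → ℝ be absolutely continuous with square-integrable derivative v' and v(0) = v(T) = 0. Then the map ε ↦ I(X + εv) is differentiable at ε = 0 with derivative (d/dε) I(X + εv)|_{ε=0} = γ ∫₀ᵀ v'(t) ( ∫₀ᵀ X'(s) e^{−ρ|t−s|} ds ) dt + 2η ∫₀ᵀ v'(t) X'(t) dt. -/
/-!
Write `D g (t) = ∫₀ᵗ g(s) e^{−ρ(t−s)} ds`. Since `D` is linear, the cost of the rate `X' + εv'` is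
a quadratic polynomial in `ε` whose linear coefficient is
`∫₀ᵀ γ (v' · D X' + X' · D v') + 2η v' X'`; every term is integrable because `D g` is continuous for
integrable `g` (the kernel factors as `e^{−ρt} e^{ρs}`) and `X' v'` is a product of two `L²`
functions. Cutting the square `[0,T]²` along the diagonal and applying Fubini to the upper triangle
turns `∫ v' · D X' + ∫ X' · D v'` into the single symmetric integral against `e^{−ρ|t−s|}`.
-/

open MeasureTheory Set

noncomputable def causalConv (k f : ℝ → ℝ) (t : ℝ) : ℝ := ∫ s in (0:ℝ)..t, f s * k (t - s)

theorem continuousOn_causalConv_exp {f : ℝ → ℝ} {T : ℝ} (ρ : ℝ)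
    (hf : IntervalIntegrable f volume 0 T) :
    ContinuousOn (causalConv (fun x => Real.exp (-ρ * x)) f) (uIcc 0 T) := by
  have hfactor : causalConv (fun x => Real.exp (-ρ * x)) f
      = fun t => Real.exp (-ρ * t) * ∫ s in (0:ℝ)..t, f s * Real.exp (ρ * s) := by
    funext t
    rw [causalConv, ← intervalIntegral.integral_const_mul]
    congr 1 with s
    rw [show -ρ * (t - s) = -ρ * t + ρ * s by ring, Real.exp_add]
    ring
  rw [hfactor]
  exact (Continuous.continuousOn (by fun_prop)).mul
    (intervalIntegral.continuousOn_primitive_interval'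
      (hf.mul_continuousOn (Continuous.continuousOn (by fun_prop))) left_mem_uIcc)

theorem causalConv_add_smul {k f g : ℝ → ℝ} {T : ℝ} (hk : Continuous k)
    (hf : IntervalIntegrable f volume 0 T) (hg : IntervalIntegrable g volume 0 T)
    (ε : ℝ) {t : ℝ} (ht : t ∈ uIcc 0 T) :
    causalConv k (fun s => f s + ε * g s) t = causalConv k f t + ε * causalConv k g t := by
  have hsub : uIcc 0 t ⊆ uIcc 0 T := uIcc_subset_uIcc_left ht
  have hkt : ContinuousOn (fun s => k (t - s)) (uIcc 0 t) := by fun_prop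
  have hft := (hf.mono_set hsub).mul_continuousOn hkt
  have hgt := ((hg.mono_set hsub).mul_continuousOn hkt).const_mul ε
  rw [causalConv, causalConv, causalConv, ← intervalIntegral.integral_const_mul,
    ← intervalIntegral.integral_add hft hgt]
  congr 1 with s
  ring

theorem setIntegral_Ioc_indicator_Iic {T t : ℝ} (ht : t ∈ Icc 0 T) (h : ℝ → ℝ) :
    ∫ s in Ioc 0 T, (Iic t).indicator h s = ∫ s in (0:ℝ)..t, h s := by
  rw [setIntegral_indicator measurableSet_Iic, Ioc_inter_Iic, inf_eq_right.2 ht.2,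
    intervalIntegral.integral_of_le ht.1]

theorem setIntegral_Ioc_indicator_Iio {T t : ℝ} (ht : t ∈ Icc 0 T) (h : ℝ → ℝ) :
    ∫ s in Ioc 0 T, (Iio t).indicator h s = ∫ s in (0:ℝ)..t, h s := by
  rw [← setIntegral_Ioc_indicator_Iic ht]
  exact integral_congr_ae (ae_restrict_of_ae (indicator_ae_eq_of_ae_eq_set Iio_ae_eq_Iic))

theorem integrable_prod_mul_kernel {k : ℝ → ℝ → ℝ} {f g : ℝ → ℝ} {T : ℝ}
    (hK : Continuous (Function.uncurry k))
    (hf : IntegrableOn f (Ioc 0 T)) (hg : IntegrableOn g (Ioc 0 T)) :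
    Integrable (fun p : ℝ × ℝ => g p.1 * f p.2 * k p.1 p.2)
      ((volume.restrict (Ioc 0 T)).prod (volume.restrict (Ioc 0 T))) := by
  have hgf := hg.mul_prod hf
  rw [Measure.prod_restrict, ← Measure.volume_eq_prod] at hgf ⊢
  exact IntegrableOn.mul_continuousOn_of_subset hgf hK.continuousOn
    (measurableSet_Ioc.prod measurableSet_Ioc)
    (isCompact_Icc.prod isCompact_Icc) (prod_mono Ioc_subset_Icc_self Ioc_subset_Icc_self)

theorem integral_mul_integral_kernel_abs {k f g : ℝ → ℝ} {T : ℝ} (hT : 0 ≤ T)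
    (hk : Continuous k) (hf : IntegrableOn f (Ioc 0 T)) (hg : IntegrableOn g (Ioc 0 T)) :
    ∫ t in (0:ℝ)..T, g t * ∫ s in (0:ℝ)..T, f s * k |t - s|
      = (∫ t in (0:ℝ)..T, g t * causalConv k f t) + ∫ s in (0:ℝ)..T, f s * causalConv k g s := by
  set μ := volume.restrict (Ioc (0:ℝ) T)
  set H : ℝ × ℝ → ℝ := fun p => g p.1 * f p.2 * k |p.1 - p.2|
  have hH : Integrable H (μ.prod μ) :=
    integrable_prod_mul_kernel (k := fun t s => k |t - s|) (by fun_prop) hf hg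
  set S : Set (ℝ × ℝ) := {p | p.2 ≤ p.1}
  have hS : MeasurableSet S := measurableSet_le measurable_snd measurable_fst
  have hlower : ∀ t ∈ Ioc 0 T, ∫ s, S.indicator H (t, s) ∂μ = g t * causalConv k f t := by
    intro t ht
    have hslice : (fun s => S.indicator H (t, s))
        = (Iic t).indicator (fun s => g t * (f s * k (t - s))) := by
      ext s
      by_cases hst : s ≤ t
      · simp [S, H, hst, abs_of_nonneg (sub_nonneg.2 hst), mul_assoc]
      · simp [S, H, hst]
    rw [hslice, setIntegral_Ioc_indicator_Iic (Ioc_subset_Icc_self ht),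
      intervalIntegral.integral_const_mul, causalConv]
  have hupper : ∀ s ∈ Ioc 0 T, ∫ t, Sᶜ.indicator H (t, s) ∂μ = f s * causalConv k g s := by
    intro s hs
    have hslice : (fun t => Sᶜ.indicator H (t, s))
        = (Iio s).indicator (fun t => f s * (g t * k (s - t))) := by
      ext t
      by_cases hts : t < s
      · simp [S, H, hts, abs_sub_comm t s, abs_of_pos (sub_pos.2 hts)]
        ring
      · simp [S, H, hts, not_lt.1 hts]
    rw [hslice, setIntegral_Ioc_indicator_Iio (Ioc_subset_Icc_self hs),
      intervalIntegral.integral_const_mul, causalConv]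
  simp only [intervalIntegral.integral_of_le hT]
  calc ∫ t, g t * ∫ s, f s * k |t - s| ∂μ ∂μ
      = ∫ p, H p ∂(μ.prod μ) := by
        rw [integral_prod _ hH]
        congr 1 with t
        rw [← integral_const_mul]
        congr 1 with s
        ring
    _ = ∫ p, S.indicator H p ∂(μ.prod μ) + ∫ p, Sᶜ.indicator H p ∂(μ.prod μ) := by
        rw [integral_indicator hS, integral_indicator hS.compl, integral_add_compl hS hH]
    _ = _ := by
        rw [integral_prod _ (hH.indicator hS), integral_prod_symm _ (hH.indicator hS.compl),
          setIntegral_congr_fun measurableSet_Ioc hlower,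
          setIntegral_congr_fun measurableSet_Ioc hupper]

theorem hasDerivAt_quadratic_zero (a b c : ℝ) :
    HasDerivAt (fun ε : ℝ => a + ε * b + ε ^ 2 * c) b 0 := by
  simpa using (((hasDerivAt_id (0:ℝ)).mul_const b).const_add a).fun_add
    ((hasDerivAt_pow 2 (0:ℝ)).mul_const c)

noncomputable def impactCost (T η γ ρ : ℝ) (g : ℝ → ℝ) : ℝ :=
  ∫ t in (0:ℝ)..T, (γ * g t * causalConv (fun x => Real.exp (-ρ * x)) g t + η * g t ^ 2)

noncomputable def impactCostPolar (T η γ ρ : ℝ) (f g : ℝ → ℝ) : ℝ :=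
  ∫ t in (0:ℝ)..T, (γ * (g t * causalConv (fun x => Real.exp (-ρ * x)) f t
    + f t * causalConv (fun x => Real.exp (-ρ * x)) g t) + 2 * η * (g t * f t))

section ImpactCost

variable {T : ℝ} (η γ ρ : ℝ) {f g : ℝ → ℝ}

theorem intervalIntegrable_of_memLp_two (hT : 0 ≤ T)
    (hf : MemLp f 2 (volume.restrict (Icc 0 T))) :
    IntervalIntegrable f volume 0 T :=
  (intervalIntegrable_iff_integrableOn_Icc_of_le hT).2 (hf.integrable one_le_two)

theorem intervalIntegrable_mul_of_memLp_two (hT : 0 ≤ T)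
    (hf : MemLp f 2 (volume.restrict (Icc 0 T)))
    (hg : MemLp g 2 (volume.restrict (Icc 0 T))) :
    IntervalIntegrable (fun t => f t * g t) volume 0 T :=
  (intervalIntegrable_iff_integrableOn_Icc_of_le hT).2 (hf.integrable_mul hg)

theorem intervalIntegrable_impactCost_integrand (hT : 0 ≤ T)
    (hf : MemLp f 2 (volume.restrict (Icc 0 T))) :
    IntervalIntegrable
      (fun t => γ * f t * causalConv (fun x => Real.exp (-ρ * x)) f t + η * f t ^ 2)
      volume 0 T := by
  have hfi := intervalIntegrable_of_memLp_two hT hf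
  exact ((hfi.const_mul γ).mul_continuousOn (continuousOn_causalConv_exp ρ hfi)).add
    (((intervalIntegrable_iff_integrableOn_Icc_of_le hT).2 hf.integrable_sq).const_mul η)

theorem impactCost_add_smul (hT : 0 ≤ T) (hf : MemLp f 2 (volume.restrict (Icc 0 T)))
    (hg : MemLp g 2 (volume.restrict (Icc 0 T))) (ε : ℝ) :
    impactCost T η γ ρ (fun t => f t + ε * g t)
      = impactCost T η γ ρ f + ε * impactCostPolar T η γ ρ f g + ε ^ 2 * impactCost T η γ ρ g := by
  have hfi := intervalIntegrable_of_memLp_two hT hf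
  have hgi := intervalIntegrable_of_memLp_two hT hg
  have hDf := continuousOn_causalConv_exp ρ hfi
  have hDg := continuousOn_causalConv_exp ρ hgi
  have hpolar : IntervalIntegrable (fun t =>
      γ * (g t * causalConv (fun x => Real.exp (-ρ * x)) f t
        + f t * causalConv (fun x => Real.exp (-ρ * x)) g t) + 2 * η * (g t * f t)) volume 0 T :=
    ((hgi.mul_continuousOn hDf).add (hfi.mul_continuousOn hDg)).const_mul γ |>.add
      ((intervalIntegrable_mul_of_memLp_two hT hg hf).const_mul (2 * η))
  rw [impactCost, impactCost, impactCost, impactCostPolar,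
    ← intervalIntegral.integral_const_mul, ← intervalIntegral.integral_const_mul,
    ← intervalIntegral.integral_add (intervalIntegrable_impactCost_integrand η γ ρ hT hf)
      (hpolar.const_mul ε),
    ← intervalIntegral.integral_add _
      ((intervalIntegrable_impactCost_integrand η γ ρ hT hg).const_mul _)]
  · refine intervalIntegral.integral_congr fun t ht => ?_
    rw [causalConv_add_smul (by fun_prop) hfi hgi ε ht]
    ring
  · exact (intervalIntegrable_impactCost_integrand η γ ρ hT hf).add (hpolar.const_mul ε)

theorem hasDerivAt_impactCost_add_smul (hT : 0 ≤ T) (hf : MemLp f 2 (volume.restrict (Icc 0 T)))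
    (hg : MemLp g 2 (volume.restrict (Icc 0 T))) :
    HasDerivAt (fun ε => impactCost T η γ ρ (fun t => f t + ε * g t))
      (impactCostPolar T η γ ρ f g) 0 := by
  simp_rw [impactCost_add_smul η γ ρ hT hf hg]
  exact hasDerivAt_quadratic_zero _ _ _

theorem impactCostPolar_eq (hT : 0 ≤ T) (hf : MemLp f 2 (volume.restrict (Icc 0 T)))
    (hg : MemLp g 2 (volume.restrict (Icc 0 T))) :
    impactCostPolar T η γ ρ f g
      = γ * (∫ t in (0:ℝ)..T, g t * ∫ s in (0:ℝ)..T, f s * Real.exp (-ρ * |t - s|))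
        + 2 * η * ∫ t in (0:ℝ)..T, g t * f t := by
  have hfi := intervalIntegrable_of_memLp_two hT hf
  have hgi := intervalIntegrable_of_memLp_two hT hg
  have hDf := continuousOn_causalConv_exp ρ hfi
  have hDg := continuousOn_causalConv_exp ρ hgi
  rw [integral_mul_integral_kernel_abs (k := fun x => Real.exp (-ρ * x)) hT (by fun_prop)
    hfi.1 hgi.1, impactCostPolar, intervalIntegral.integral_add
      ((hgi.mul_continuousOn hDf).add (hfi.mul_continuousOn hDg) |>.const_mul γ)
      ((intervalIntegrable_mul_of_memLp_two hT hg hf).const_mul (2 * η)),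
    intervalIntegral.integral_const_mul, intervalIntegral.integral_add
      (hgi.mul_continuousOn hDf) (hfi.mul_continuousOn hDg),
    intervalIntegral.integral_const_mul]

end ImpactCost

theorem stmt_7_general (T η γ ρ : ℝ) (hT : 0 < T)
    (I : (ℝ → ℝ) → ℝ)
    (hI : ∀ g : ℝ → ℝ, I g = ∫ t in (0:ℝ)..T,
      (γ * g t * (∫ s in (0:ℝ)..t, g s * Real.exp (-ρ * (t - s))) + η * (g t) ^ 2))
    (X' v' : ℝ → ℝ)
    (hX' : MemLp X' 2 (volume.restrict (Icc 0 T)))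
    (hv' : MemLp v' 2 (volume.restrict (Icc 0 T))) :
    HasDerivAt (fun ε : ℝ => I (fun t => X' t + ε * v' t))
      (γ * (∫ t in (0:ℝ)..T, v' t * ∫ s in (0:ℝ)..T, X' s * Real.exp (-ρ * |t - s|)) +
        2 * η * ∫ t in (0:ℝ)..T, v' t * X' t) 0 := by
  have hI' : (fun ε : ℝ => I (fun t => X' t + ε * v' t))
      = fun ε => impactCost T η γ ρ (fun t => X' t + ε * v' t) :=
    funext fun ε => hI _
  rw [hI', ← impactCostPolar_eq η γ ρ hT.le hX' hv']
  exact hasDerivAt_impactCost_add_smul η γ ρ hT.le hX' hv'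

/-- First variation of the impact-cost functional: for `X` absolutely continuous with
square-integrable derivative `X'` and `v` absolutely continuous with square-integrable
derivative `v'` and `v(0) = v(T) = 0`, the map `ε ↦ I(X + εv)` is differentiable at `0`
with the stated derivative. (Here `I` is expressed as a functional of the derivative,
and the derivative of `X + εv` is `X' + εv'`.) -/
theorem stmt_7 (T η γ ρ : ℝ) (hT : 0 < T) (hη : 0 < η) (hγ : 0 < γ) (hρ : 0 < ρ)
    (I : (ℝ → ℝ) → ℝ)
    (hI : ∀ g : ℝ → ℝ, I g = ∫ t in (0:ℝ)..T,
      (γ * g t * (∫ s in (0:ℝ)..t, g s * Real.exp (-ρ * (t - s))) + η * (g t) ^ 2))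
    (X X' v v' : ℝ → ℝ)
    (hX : ∀ t ∈ Icc (0:ℝ) T, X t = X 0 + ∫ s in (0:ℝ)..t, X' s)
    (hX' : MemLp X' 2 (volume.restrict (Icc 0 T)))
    (hv : ∀ t ∈ Icc (0:ℝ) T, v t = v 0 + ∫ s in (0:ℝ)..t, v' s)
    (hv' : MemLp v' 2 (volume.restrict (Icc 0 T)))
    (hv0 : v 0 = 0) (hvT : v T = 0) :
    HasDerivAt (fun ε : ℝ => I (fun t => X' t + ε * v' t))
      (γ * (∫ t in (0:ℝ)..T, v' t * ∫ s in (0:ℝ)..T, X' s * Real.exp (-ρ * |t - s|)) +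
        2 * η * ∫ t in (0:ℝ)..T, v' t * X' t) 0 :=
  stmt_7_general T η γ ρ hT I hI X' v' hX' hv'
end

section
/- First-order necessary condition (Wiener–Hopf integral equation of the second kind): if ξ̂ is admissible and minimizes the execution-cost functional C over all admissible strategies, then there exists a constant c₀ such that (γ/(2η)) ∫₀ᵀ ξ̂(s) e^{−ρ|t−s|} ds + ξ̂(t) = c₀ for Lebesgue-almost every t ∈ [0,T]. -/
/-!
The cost is the quadratic form `Φ(ξ, ξ)` of
`Φ(f, g) = η ∫ f g + γ ∬_{s ≤ t} f(t) g(s) e^{-ρ(t-s)}`, so for `ζ` with `∫ ζ = 0` the admissible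
perturbation `ξ̂ + ε ζ` costs `C(ξ̂) + ε (Φ(ξ̂, ζ) + Φ(ζ, ξ̂)) + ε² Φ(ζ, ζ)`, and minimality forces
the linear coefficient to vanish. By Fubini its two Volterra halves combine into the symmetric kernel
`e^{-ρ|t-s|}`, so `∫ ζ g = 0` for `g = 2η ξ̂ + γ ∫ ξ̂(s) e^{-ρ|t-s|} ds`. Testing with
`ζ = g - mean g` gives `∫ ζ² = 0`, hence `g` is a.e. constant.
-/

open MeasureTheory Set

lemma eq_zero_of_forall_nonneg_mul_add_sq_mul {L Q : ℝ} (h : ∀ ε : ℝ, 0 ≤ ε * L + ε ^ 2 * Q) :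
    L = 0 := by
  -- test with `ε = -δ L`, where `δ = 1 / (|Q| + 1)` makes `δ Q < 1`
  set δ := 1 / (|Q| + 1)
  have hδ : 0 < δ := by positivity
  have hδQ : δ * Q - 1 < 0 := by
    rw [sub_neg, div_mul_eq_mul_div, one_mul, div_lt_one (by positivity)]
    linarith [le_abs_self Q]
  have hle : 0 ≤ δ * L ^ 2 * (δ * Q - 1) := by linarith [h (-δ * L)]
  have heq : δ * L ^ 2 * (δ * Q - 1) = 0 :=
    le_antisymm (mul_nonpos_of_nonneg_of_nonpos (by positivity) hδQ.le) hle
  simpa [hδ.ne', hδQ.ne] using heq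

lemma integral_add_mul {α : Type*} [MeasurableSpace α] {μ : Measure α} {f g : α → ℝ}
    (hf : Integrable f μ) (hg : Integrable g μ) (ε : ℝ) :
    ∫ x, (f x + ε * g x) ∂μ = ∫ x, f x ∂μ + ε * ∫ x, g x ∂μ := by
  rw [integral_add hf (hg.const_mul ε), integral_const_mul]

lemma exists_ae_eq_const_of_forall_integral_mul_eq_zero {α : Type*} [MeasurableSpace α]
    {μ : Measure α} [IsFiniteMeasure μ] {g : α → ℝ} (hg : MemLp g 2 μ)
    (h : ∀ ζ : α → ℝ, MemLp ζ 2 μ → ∫ t, ζ t ∂μ = 0 → ∫ t, ζ t * g t ∂μ = 0) :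
    ∃ c : ℝ, ∀ᵐ t ∂μ, g t = c := by
  rcases eq_zero_or_neZero μ with rfl | _
  · exact ⟨0, by simp⟩
  set c := (∫ t, g t ∂μ) / μ.real univ
  set ζ : α → ℝ := fun t => g t - c
  have hζ : MemLp ζ 2 μ := hg.sub (memLp_const c)
  have hζ0 : ∫ t, ζ t ∂μ = 0 := by
    rw [integral_sub (hg.integrable one_le_two) (integrable_const c), integral_const, smul_eq_mul,
      mul_div_cancel₀ _ measureReal_univ_ne_zero, sub_self]
  have hζsq : ∫ t, ζ t ^ 2 ∂μ = 0 := by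
    have hsq : ∀ t, ζ t ^ 2 = ζ t * g t + -c * ζ t := fun t => by ring
    simp_rw [hsq]
    rw [integral_add_mul (f := fun t => ζ t * g t) (hζ.integrable_mul hg)
      (hζ.integrable one_le_two), h ζ hζ hζ0, hζ0]
    ring
  refine ⟨c, ?_⟩
  filter_upwards [(integral_eq_zero_iff_of_nonneg (fun t => sq_nonneg (ζ t))
    hζ.integrable_sq).1 hζsq] with t ht
  exact sub_eq_zero.1 (pow_eq_zero_iff two_ne_zero |>.1 ht)

lemma exp_neg_mul_le_one {ρ a : ℝ} (hρ : 0 ≤ ρ) (ha : 0 ≤ a) : Real.exp (-ρ * a) ≤ 1 :=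
  Real.exp_le_one_iff.2 (by nlinarith)

noncomputable def volterraKernel (ρ : ℝ) : ℝ × ℝ → ℝ :=
  {p : ℝ × ℝ | p.2 ≤ p.1}.indicator fun p => Real.exp (-ρ * (p.1 - p.2))

lemma measurable_volterraKernel (ρ : ℝ) : Measurable (volterraKernel ρ) :=
  (by fun_prop : Measurable fun p : ℝ × ℝ => Real.exp (-ρ * (p.1 - p.2))).indicator
    (measurableSet_le measurable_snd measurable_fst)

lemma volterraKernel_apply_of_le {ρ t s : ℝ} (h : s ≤ t) :
    volterraKernel ρ (t, s) = Real.exp (-ρ * (t - s)) :=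
  indicator_of_mem (show (t, s) ∈ {p : ℝ × ℝ | p.2 ≤ p.1} from h) _

lemma volterraKernel_apply_of_lt {ρ t s : ℝ} (h : t < s) : volterraKernel ρ (t, s) = 0 :=
  indicator_of_notMem (show (t, s) ∉ {p : ℝ × ℝ | p.2 ≤ p.1} from not_le.2 h) _

lemma norm_volterraKernel_le_one {ρ : ℝ} (hρ : 0 ≤ ρ) (p : ℝ × ℝ) : ‖volterraKernel ρ p‖ ≤ 1 := by
  obtain ⟨t, s⟩ := p
  rcases le_or_gt s t with h | h
  · rw [volterraKernel_apply_of_le h, Real.norm_eq_abs, Real.abs_exp]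
    exact exp_neg_mul_le_one hρ (sub_nonneg.2 h)
  · simp [volterraKernel_apply_of_lt h]

lemma volterraKernel_add_volterraKernel_swap (ρ : ℝ) {t s : ℝ} (h : t ≠ s) :
    volterraKernel ρ (t, s) + volterraKernel ρ (s, t) = Real.exp (-ρ * |t - s|) := by
  rcases h.lt_or_gt with h | h
  · rw [volterraKernel_apply_of_lt h, volterraKernel_apply_of_le h.le, zero_add,
      abs_of_neg (sub_neg.2 h), neg_sub]
  · rw [volterraKernel_apply_of_le h.le, volterraKernel_apply_of_lt h, add_zero,
      abs_of_pos (sub_pos.2 h)]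

lemma integrable_mul_prod_mul_of_norm_le {α β : Type*} [MeasurableSpace α] [MeasurableSpace β]
    {μ : Measure α} {ν : Measure β} [SFinite ν] {f : α → ℝ} {g : β → ℝ} {k : α × β → ℝ}
    (hf : Integrable f μ) (hg : Integrable g ν) (hk : AEStronglyMeasurable k (μ.prod ν)) {c : ℝ}
    (hkc : ∀ p, ‖k p‖ ≤ c) :
    Integrable (fun p : α × β => f p.1 * g p.2 * k p) (μ.prod ν) :=
  (hf.mul_prod hg).mul_bdd hk (ae_of_all _ hkc)

lemma norm_mul_exp_neg_mul_abs_le {ρ : ℝ} (hρ : 0 ≤ ρ) (a b : ℝ) :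
    ‖a * Real.exp (-ρ * |b|)‖ ≤ ‖a‖ := by
  rw [norm_mul, Real.norm_eq_abs (Real.exp _), Real.abs_exp]
  exact mul_le_of_le_one_right (norm_nonneg a) (exp_neg_mul_le_one hρ (abs_nonneg b))

section expKernel

variable {ρ : ℝ} {μ : Measure ℝ} {f : ℝ → ℝ}

lemma continuous_integral_mul_exp_neg_mul_abs (hρ : 0 ≤ ρ) (hf : Integrable f μ) :
    Continuous fun t => ∫ s, f s * Real.exp (-ρ * |t - s|) ∂μ :=
  continuous_of_dominated
    (fun t => hf.aestronglyMeasurable.mul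
      (by fun_prop : Continuous fun s => Real.exp (-ρ * |t - s|)).aestronglyMeasurable)
    (fun t => ae_of_all _ fun s => norm_mul_exp_neg_mul_abs_le hρ (f s) (t - s))
    hf.norm (ae_of_all _ fun s => by fun_prop)

lemma memLp_integral_mul_exp_neg_mul_abs (hρ : 0 ≤ ρ) (hf : Integrable f μ) (p : ENNReal)
    (ν : Measure ℝ) [IsFiniteMeasure ν] :
    MemLp (fun t => ∫ s, f s * Real.exp (-ρ * |t - s|) ∂μ) p ν :=
  MemLp.of_bound (continuous_integral_mul_exp_neg_mul_abs hρ hf).aestronglyMeasurable _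
    (ae_of_all _ fun t => norm_integral_le_of_norm_le hf.norm
      (ae_of_all _ fun s => norm_mul_exp_neg_mul_abs_le hρ (f s) (t - s)))

end expKernel

noncomputable def costForm (η γ ρ : ℝ) (μ : Measure ℝ) (f g : ℝ → ℝ) : ℝ :=
  η * ∫ t, f t * g t ∂μ + γ * ∫ p, f p.1 * g p.2 * volterraKernel ρ p ∂μ.prod μ

section costForm

variable {η γ ρ : ℝ} {μ : Measure ℝ} [IsFiniteMeasure μ] {f g h : ℝ → ℝ}

lemma integrable_mul_prod_mul_volterraKernel (hρ : 0 ≤ ρ) (hf : MemLp f 2 μ) (hg : MemLp g 2 μ) :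
    Integrable (fun p : ℝ × ℝ => f p.1 * g p.2 * volterraKernel ρ p) (μ.prod μ) :=
  integrable_mul_prod_mul_of_norm_le (hf.integrable one_le_two) (hg.integrable one_le_two)
    (measurable_volterraKernel ρ).aestronglyMeasurable (norm_volterraKernel_le_one hρ)

lemma costForm_add_mul_left (hρ : 0 ≤ ρ) (hf : MemLp f 2 μ) (hg : MemLp g 2 μ)
    (hh : MemLp h 2 μ) (ε : ℝ) :
    costForm η γ ρ μ (fun t => f t + ε * g t) h
      = costForm η γ ρ μ f h + ε * costForm η γ ρ μ g h := by
  have h₁ : ∫ t, (f t + ε * g t) * h t ∂μ = ∫ t, f t * h t ∂μ + ε * ∫ t, g t * h t ∂μ := by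
    rw [← integral_add_mul (f := fun t => f t * h t) (g := fun t => g t * h t)
      (hf.integrable_mul hh) (hg.integrable_mul hh)]
    congr 1 with t
    ring
  have h₂ : ∫ p, (f p.1 + ε * g p.1) * h p.2 * volterraKernel ρ p ∂μ.prod μ
      = ∫ p, f p.1 * h p.2 * volterraKernel ρ p ∂μ.prod μ
        + ε * ∫ p, g p.1 * h p.2 * volterraKernel ρ p ∂μ.prod μ := by
    rw [← integral_add_mul (integrable_mul_prod_mul_volterraKernel hρ hf hh)
      (integrable_mul_prod_mul_volterraKernel hρ hg hh)]
    congr 1 with p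
    ring
  rw [costForm, h₁, h₂, costForm, costForm]
  ring

lemma costForm_add_mul_right (hρ : 0 ≤ ρ) (hf : MemLp f 2 μ) (hg : MemLp g 2 μ)
    (hh : MemLp h 2 μ) (ε : ℝ) :
    costForm η γ ρ μ h (fun t => f t + ε * g t)
      = costForm η γ ρ μ h f + ε * costForm η γ ρ μ h g := by
  have h₁ : ∫ t, h t * (f t + ε * g t) ∂μ = ∫ t, h t * f t ∂μ + ε * ∫ t, h t * g t ∂μ := by
    rw [← integral_add_mul (f := fun t => h t * f t) (g := fun t => h t * g t)
      (hh.integrable_mul hf) (hh.integrable_mul hg)]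
    congr 1 with t
    ring
  have h₂ : ∫ p, h p.1 * (f p.2 + ε * g p.2) * volterraKernel ρ p ∂μ.prod μ
      = ∫ p, h p.1 * f p.2 * volterraKernel ρ p ∂μ.prod μ
        + ε * ∫ p, h p.1 * g p.2 * volterraKernel ρ p ∂μ.prod μ := by
    rw [← integral_add_mul (integrable_mul_prod_mul_volterraKernel hρ hh hf)
      (integrable_mul_prod_mul_volterraKernel hρ hh hg)]
    congr 1 with p
    ring
  rw [costForm, h₁, h₂, costForm, costForm]
  ring

lemma costForm_add_mul_self (hρ : 0 ≤ ρ) (hf : MemLp f 2 μ) (hg : MemLp g 2 μ) (ε : ℝ) :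
    costForm η γ ρ μ (fun t => f t + ε * g t) (fun t => f t + ε * g t)
      = costForm η γ ρ μ f f + ε * (costForm η γ ρ μ f g + costForm η γ ρ μ g f)
        + ε ^ 2 * costForm η γ ρ μ g g := by
  have hfg : MemLp (fun t => f t + ε * g t) 2 μ := hf.add (hg.const_mul ε)
  rw [costForm_add_mul_left hρ hf hg hfg, costForm_add_mul_right hρ hf hg hf,
    costForm_add_mul_right hρ hf hg hg]
  ring

lemma costForm_add_costForm_swap_eq_zero_of_forall_le (hρ : 0 ≤ ρ) (hf : MemLp f 2 μ)
    (hg : MemLp g 2 μ)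
    (hmin : ∀ ε : ℝ, costForm η γ ρ μ f f
      ≤ costForm η γ ρ μ (fun t => f t + ε * g t) (fun t => f t + ε * g t)) :
    costForm η γ ρ μ f g + costForm η γ ρ μ g f = 0 :=
  eq_zero_of_forall_nonneg_mul_add_sq_mul (Q := costForm η γ ρ μ g g) fun ε => by
    linarith [hmin ε, costForm_add_mul_self (η := η) (γ := γ) hρ hf hg ε]


lemma costForm_add_costForm_swap [NullSingletonClass μ] (hρ : 0 ≤ ρ) (hf : MemLp f 2 μ)
    (hg : MemLp g 2 μ) :
    costForm η γ ρ μ f g + costForm η γ ρ μ g f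
      = ∫ t, g t * (2 * η * f t + γ * ∫ s, f s * Real.exp (-ρ * |t - s|) ∂μ) ∂μ := by
  set V := volterraKernel ρ
  set G : ℝ × ℝ → ℝ := fun p => g p.1 * f p.2 * (V p + V p.swap)
  have hV : Integrable (fun p : ℝ × ℝ => g p.1 * f p.2 * V p) (μ.prod μ) :=
    integrable_mul_prod_mul_volterraKernel hρ hg hf
  have hVswap : Integrable (fun p : ℝ × ℝ => g p.1 * f p.2 * V p.swap) (μ.prod μ) :=
    integrable_mul_prod_mul_of_norm_le (hg.integrable one_le_two) (hf.integrable one_le_two)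
      ((measurable_volterraKernel ρ).comp measurable_swap).aestronglyMeasurable
      (fun p => norm_volterraKernel_le_one hρ p.swap)
  have hG : Integrable G (μ.prod μ) :=
    (hV.add hVswap).congr (ae_of_all _ fun p => by simp only [G, Pi.add_apply]; ring)
  have hprod : ∫ p, f p.1 * g p.2 * V p ∂μ.prod μ + ∫ p, g p.1 * f p.2 * V p ∂μ.prod μ
      = ∫ p, G p ∂μ.prod μ := by
    have hswap : ∫ p, f p.1 * g p.2 * V p ∂μ.prod μ = ∫ p, g p.1 * f p.2 * V p.swap ∂μ.prod μ := by
      rw [← integral_prod_swap]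
      simp only [Prod.fst_swap, Prod.snd_swap, mul_comm (f _)]
    rw [hswap, ← integral_add hVswap hV]
    congr 1 with p
    simp only [G]
    ring
  -- off the diagonal `V (t, s) + V (s, t) = exp (-ρ |t - s|)`, and the diagonal is null
  have hinner : ∀ t, ∫ s, G (t, s) ∂μ = g t * ∫ s, f s * Real.exp (-ρ * |t - s|) ∂μ := by
    intro t
    rw [← integral_const_mul]
    refine integral_congr_ae ?_
    filter_upwards [Measure.ae_ne μ t] with s hs
    simp only [G, Prod.swap_prod_mk, V, volterraKernel_add_volterraKernel_swap ρ hs.symm]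
    ring
  have hKint : Integrable (fun t => g t * ∫ s, f s * Real.exp (-ρ * |t - s|) ∂μ) μ := by
    simpa only [hinner] using hG.integral_prod_left
  calc costForm η γ ρ μ f g + costForm η γ ρ μ g f
      = 2 * η * ∫ t, g t * f t ∂μ + γ * ∫ p, G p ∂μ.prod μ := by
        rw [costForm, costForm, ← hprod]
        simp only [mul_comm (f _) (g _)]
        ring
    _ = ∫ t, (2 * η * (g t * f t) + γ * (g t * ∫ s, f s * Real.exp (-ρ * |t - s|) ∂μ)) ∂μ := by
        rw [integral_add (f := fun t => 2 * η * (g t * f t))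
          ((hg.integrable_mul hf).const_mul _) (hKint.const_mul _),
          integral_const_mul, integral_const_mul, integral_prod G hG]
        simp only [hinner]
    _ = _ := by
        congr 1 with t
        ring

end costForm

lemma intervalIntegral_eq_integral_Icc {a b : ℝ} (hab : a ≤ b) (f : ℝ → ℝ) :
    ∫ t in a..b, f t = ∫ t in Icc a b, f t :=
  (intervalIntegral.integral_of_le hab).trans integral_Icc_eq_integral_Ioc.symm

lemma intervalIntegral_mul_exp_eq_integral_volterraKernel {T ρ t : ℝ} (ht : t ∈ Icc 0 T)
    (ξ : ℝ → ℝ) :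
    ∫ s in (0:ℝ)..t, ξ s * Real.exp (-ρ * (t - s))
      = ∫ s in Icc 0 T, ξ s * volterraKernel ρ (t, s) := by
  have hind : ∀ s, ξ s * volterraKernel ρ (t, s)
      = (Iic t).indicator (fun s => ξ s * Real.exp (-ρ * (t - s))) s := by
    intro s
    rcases le_or_gt s t with hs | hs
    · rw [volterraKernel_apply_of_le hs, indicator_of_mem (mem_Iic.2 hs)]
    · rw [volterraKernel_apply_of_lt hs, indicator_of_notMem (notMem_Iic.2 hs), mul_zero]
  have hset : Iic t ∩ Icc 0 T = Icc 0 t := by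
    ext s
    simp only [mem_inter_iff, mem_Iic, mem_Icc]
    constructor
    · exact fun h => ⟨h.2.1, h.1⟩
    · exact fun h => ⟨h.2, h.1, h.2.trans ht.2⟩
  simp_rw [hind]
  rw [integral_indicator measurableSet_Iic, Measure.restrict_restrict measurableSet_Iic, hset,
    intervalIntegral_eq_integral_Icc ht.1]

lemma intervalIntegral_cost_eq_costForm {T η γ ρ : ℝ} (hT : 0 ≤ T) (hρ : 0 ≤ ρ) {ξ : ℝ → ℝ}
    (hξ : MemLp ξ 2 (volume.restrict (Icc 0 T))) :
    ∫ t in (0:ℝ)..T, (η * ξ t ^ 2 + γ * ξ t * ∫ s in (0:ℝ)..t, ξ s * Real.exp (-ρ * (t - s)))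
      = costForm η γ ρ (volume.restrict (Icc 0 T)) ξ ξ := by
  have hV := integrable_mul_prod_mul_volterraKernel hρ hξ hξ
  rw [intervalIntegral_eq_integral_Icc hT]
  calc _ = ∫ t in Icc 0 T, (η * (ξ t * ξ t)
        + γ * ∫ s in Icc 0 T, ξ t * ξ s * volterraKernel ρ (t, s)) := by
        refine setIntegral_congr_fun measurableSet_Icc fun t ht => ?_
        rw [intervalIntegral_mul_exp_eq_integral_volterraKernel ht, mul_assoc γ,
          ← integral_const_mul]
        simp only [sq, mul_assoc]
    _ = costForm η γ ρ (volume.restrict (Icc 0 T)) ξ ξ := by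
        rw [integral_add (f := fun t => η * (ξ t * ξ t))
          (g := fun t => γ * ∫ s in Icc 0 T, ξ t * ξ s * volterraKernel ρ (t, s))
          ((hξ.integrable_mul hξ).const_mul η) (hV.integral_prod_left.const_mul γ),
          integral_const_mul, integral_const_mul, ← integral_prod _ hV]
        rfl

theorem stmt_12_general (T x η γ ρ : ℝ) (hT : 0 < T) (hη : 0 < η)
    (hρ : 0 < ρ)
    (C : (ℝ → ℝ) → ℝ)
    (hC : ∀ ξ : ℝ → ℝ, C ξ = ∫ t in (0:ℝ)..T,
      (η * (ξ t) ^ 2 + γ * ξ t * ∫ s in (0:ℝ)..t, ξ s * Real.exp (-ρ * (t - s))))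
    (ξhat : ℝ → ℝ)
    (hmem : MemLp ξhat 2 (volume.restrict (Icc 0 T)))
    (hadm : (∫ t in (0:ℝ)..T, ξhat t) = x)
    (hmin : ∀ ξ : ℝ → ℝ, MemLp ξ 2 (volume.restrict (Icc 0 T)) →
      (∫ t in (0:ℝ)..T, ξ t) = x → C ξhat ≤ C ξ) :
    ∃ c₀ : ℝ, ∀ᵐ t ∂(volume.restrict (Icc 0 T)),
      γ / (2 * η) * (∫ s in (0:ℝ)..T, ξhat s * Real.exp (-ρ * |t - s|)) + ξhat t = c₀ := by
  set μ := volume.restrict (Icc (0:ℝ) T)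
  set K : ℝ → ℝ := fun t => ∫ s, ξhat s * Real.exp (-ρ * |t - s|) ∂μ
  have hξ : Integrable ξhat μ := hmem.integrable one_le_two
  have hK : MemLp K 2 μ := memLp_integral_mul_exp_neg_mul_abs hρ.le hξ 2 μ
  have hcost : ∀ ξ, MemLp ξ 2 μ → C ξ = costForm η γ ρ μ ξ ξ := fun ξ hξ =>
    (hC ξ).trans (intervalIntegral_cost_eq_costForm hT.le hρ.le hξ)
  have hfirstOrder : ∀ ζ : ℝ → ℝ, MemLp ζ 2 μ → ∫ t, ζ t ∂μ = 0 →
      ∫ t, ζ t * (2 * η * ξhat t + γ * K t) ∂μ = 0 := by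
    intro ζ hζ hζ0
    rw [← costForm_add_costForm_swap hρ.le hmem hζ]
    refine costForm_add_costForm_swap_eq_zero_of_forall_le hρ.le hmem hζ fun ε => ?_
    have hpert : MemLp (fun t => ξhat t + ε * ζ t) 2 μ := hmem.add (hζ.const_mul ε)
    rw [← hcost _ hmem, ← hcost _ hpert]
    refine hmin _ hpert ?_
    rw [intervalIntegral_eq_integral_Icc hT.le, integral_add_mul hξ (hζ.integrable one_le_two),
      ← intervalIntegral_eq_integral_Icc hT.le, hadm, hζ0, mul_zero, add_zero]
  obtain ⟨c, hc⟩ := exists_ae_eq_const_of_forall_integral_mul_eq_zero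
    (g := fun t => 2 * η * ξhat t + γ * K t) ((hmem.const_mul _).add (hK.const_mul _)) hfirstOrder
  refine ⟨c / (2 * η), ?_⟩
  filter_upwards [hc] with t ht
  rw [← ht, intervalIntegral_eq_integral_Icc hT.le]
  change γ / (2 * η) * K t + ξhat t = _
  field_simp
  ring

/-- First-order necessary condition (Wiener–Hopf integral equation of the second kind):
if `ξ̂` is admissible and minimizes the execution cost `C` over admissible strategies,
then there is a constant `c₀` with
`(γ/(2η)) ∫₀ᵀ ξ̂(s) e^{-ρ|t-s|} ds + ξ̂(t) = c₀` for a.e. `t ∈ [0,T]`. -/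
theorem stmt_12 (T x η γ ρ : ℝ) (hT : 0 < T) (hx : 0 < x) (hη : 0 < η) (hγ : 0 < γ)
    (hρ : 0 < ρ)
    (C : (ℝ → ℝ) → ℝ)
    (hC : ∀ ξ : ℝ → ℝ, C ξ = ∫ t in (0:ℝ)..T,
      (η * (ξ t) ^ 2 + γ * ξ t * ∫ s in (0:ℝ)..t, ξ s * Real.exp (-ρ * (t - s))))
    (ξhat : ℝ → ℝ)
    (hmem : MemLp ξhat 2 (volume.restrict (Icc 0 T)))
    (hadm : (∫ t in (0:ℝ)..T, ξhat t) = x)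
    (hmin : ∀ ξ : ℝ → ℝ, MemLp ξ 2 (volume.restrict (Icc 0 T)) →
      (∫ t in (0:ℝ)..T, ξ t) = x → C ξhat ≤ C ξ) :
    ∃ c₀ : ℝ, ∀ᵐ t ∂(volume.restrict (Icc 0 T)),
      γ / (2 * η) * (∫ s in (0:ℝ)..T, ξhat s * Real.exp (-ρ * |t - s|)) + ξhat t = c₀ :=
  stmt_12_general T x η γ ρ hT hη hρ C hC ξhat hmem hadm hmin
end

section
/- Reduction of the integral equation to an ODE: let z : [0,T] → ℝ be continuous and suppose there is a constant c₀ with (γ/(2η)) ∫₀ᵀ z(s) e^{−ρ|t−s|} ds + z(t) = c₀ for all t ∈ [0,T]. Then z is twice continuously differentiable on [0,T] and satisfies z''(t) − ρ(ρ + γ/η) z(t) = −ρ² c₀ for all t ∈ [0,T]. -/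
/-!
Splitting the integral at `s = t` writes it as
`G(t) = e^{-ρt} ∫_0^t z(s) e^{ρs} ds + e^{ρt} ∫_t^T z(s) e^{-ρs} ds`, an expression that makes sense
for every real `t` once `z` is extended continuously to `ℝ` (Tietze). Differentiating twice gives
`G'' = ρ² G - 2ρ z`: the kernel `e^{-ρ|t|} / (2ρ)` is the Green's function of `ρ² - d²/dt²`.
Since `z = c₀ - (γ/(2η)) G` on `[0,T]`, the ODE follows.
-/

open Set Real

universe u v

theorem ContinuousOn.exists_continuous_eqOn {X : Type u} {Y : Type v} [TopologicalSpace X]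
    [NormalSpace X] [TopologicalSpace Y] [TietzeExtension.{u, v} Y] {s : Set X} {f : X → Y}
    (hs : IsClosed s) (hf : ContinuousOn f s) : ∃ g : X → Y, Continuous g ∧ EqOn g f s := by
  obtain ⟨g, hg⟩ := ContinuousMap.exists_restrict_eq hs ⟨s.domRestrict f, hf.domRestrict⟩
  exact ⟨g, g.continuous, fun x hx => congr($hg ⟨x, hx⟩)⟩

/-- The weight `ε` lets one definition cover both `∫_a^b w(s) e^{-ρ|t-s|} ds` (`ε = 1`, for
`t ∈ [a,b]`) and its derivative divided by `ρ` (`ε = -1`). -/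
noncomputable def splitExpConv (ρ a b ε : ℝ) (w : ℝ → ℝ) (t : ℝ) : ℝ :=
  ε * (exp (-ρ * t) * ∫ s in a..t, w s * exp (ρ * s)) +
    exp (ρ * t) * ∫ s in t..b, w s * exp (-ρ * s)

section SplitExpConv

variable {w : ℝ → ℝ} (ρ a b ε : ℝ)

theorem hasDerivAt_splitExpConv (hw : Continuous w) (t : ℝ) :
    HasDerivAt (splitExpConv ρ a b ε w) (ρ * splitExpConv ρ a b (-ε) w t + (ε - 1) * w t) t := by
  have hlow : HasDerivAt (fun t => ∫ s in a..t, w s * exp (ρ * s)) (w t * exp (ρ * t)) t :=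
    (hw.mul (by fun_prop)).integral_hasStrictDerivAt a t |>.hasDerivAt
  have hup : HasDerivAt (fun t => ∫ s in t..b, w s * exp (-ρ * s)) (-(w t * exp (-ρ * t))) t := by
    have hc : Continuous fun s => w s * exp (-ρ * s) := hw.mul (by fun_prop)
    exact (intervalIntegral.integral_hasStrictDerivAt_left (hc.intervalIntegrable t b)
      (hc.stronglyMeasurableAtFilter _ _) hc.continuousAt).hasDerivAt
  have hexp (c : ℝ) : HasDerivAt (fun t => exp (c * t)) (c * exp (c * t)) t := by
    simpa [mul_comm] using ((hasDerivAt_id t).const_mul c).exp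
  have hinv : exp (-ρ * t) * exp (ρ * t) = 1 := by rw [← exp_add]; simp
  refine ((((hexp (-ρ)).mul hlow).const_mul ε).add ((hexp ρ).mul hup)).congr_deriv ?_
  simp only [splitExpConv]
  linear_combination (ε - 1) * w t * hinv

theorem continuous_splitExpConv (hw : Continuous w) : Continuous (splitExpConv ρ a b ε w) :=
  continuous_iff_continuousAt.2 fun t => (hasDerivAt_splitExpConv ρ a b ε hw t).continuousAt

theorem integral_mul_exp_neg_abs_sub (hw : Continuous w) {t : ℝ} (ht : t ∈ Icc a b) :
    ∫ s in a..b, w s * exp (-ρ * |t - s|) = splitExpConv ρ a b 1 w t := by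
  have hc : Continuous fun s => w s * exp (-ρ * |t - s|) := hw.mul (by fun_prop)
  rw [← intervalIntegral.integral_add_adjacent_intervals (hc.intervalIntegrable a t)
    (hc.intervalIntegrable t b), splitExpConv, one_mul, ← intervalIntegral.integral_const_mul,
    ← intervalIntegral.integral_const_mul]
  congr 1 <;> refine intervalIntegral.integral_congr fun s hs => ?_
  · rw [uIcc_of_le ht.1] at hs
    rw [abs_of_nonneg (sub_nonneg.2 hs.2), show -ρ * (t - s) = -ρ * t + ρ * s by ring, exp_add]
    ring
  · rw [uIcc_of_le ht.2] at hs
    rw [abs_of_nonpos (sub_nonpos.2 hs.1), show -ρ * -(t - s) = ρ * t + -ρ * s by ring, exp_add]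
    ring

end SplitExpConv

theorem stmt_13_general (T η γ ρ : ℝ)
    (z : ℝ → ℝ) (hz : ContinuousOn z (Icc 0 T)) (c₀ : ℝ)
    (heq : ∀ t ∈ Icc (0:ℝ) T,
      γ / (2 * η) * (∫ s in (0:ℝ)..T, z s * Real.exp (-ρ * |t - s|)) + z t = c₀) :
    ∃ z' z'' : ℝ → ℝ,
      (∀ t ∈ Icc (0:ℝ) T, HasDerivWithinAt z (z' t) (Icc 0 T) t) ∧
      (∀ t ∈ Icc (0:ℝ) T, HasDerivWithinAt z' (z'' t) (Icc 0 T) t) ∧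
      ContinuousOn z' (Icc 0 T) ∧ ContinuousOn z'' (Icc 0 T) ∧
      (∀ t ∈ Icc (0:ℝ) T, z'' t - ρ * (ρ + γ / η) * z t = -(ρ ^ 2) * c₀) := by
  set k := γ / (2 * η)
  obtain ⟨w, hw, hwz⟩ := hz.exists_continuous_eqOn isClosed_Icc
  set G := splitExpConv ρ 0 T 1 w
  set H := splitExpConv ρ 0 T (-1) w
  have hG (t : ℝ) : HasDerivAt G (ρ * H t) t := by
    simpa using hasDerivAt_splitExpConv ρ 0 T 1 hw t
  have hH (t : ℝ) : HasDerivAt H (ρ * G t - 2 * w t) t := by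
    convert hasDerivAt_splitExpConv ρ 0 T (-1) hw t using 1
    simp only [G, neg_neg]
    ring
  have hzG : EqOn z (fun t => c₀ - k * G t) (Icc 0 T) := fun t ht => by
    have hwz' : EqOn z w (uIcc 0 T) := by rw [uIcc_of_le (ht.1.trans ht.2)]; exact hwz.symm
    rw [← heq t ht, intervalIntegral.integral_congr fun s hs => by rw [hwz' hs],
      integral_mul_exp_neg_abs_sub ρ 0 T hw ht]
    ring
  refine ⟨fun t => -k * (ρ * H t), fun t => -k * (ρ * (ρ * G t - 2 * w t)), fun t ht => ?_,
    fun t _ => (((hH t).const_mul ρ).const_mul (-k)).hasDerivWithinAt, ?_, ?_, fun t ht => ?_⟩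
  · refine HasDerivWithinAt.congr ?_ hzG (hzG ht)
    simpa using (((hG t).const_mul k).const_sub c₀).hasDerivWithinAt
  · have := continuous_splitExpConv ρ 0 T (-1) hw
    fun_prop
  · have := continuous_splitExpConv ρ 0 T 1 hw
    fun_prop
  · have h2k : 2 * k = γ / η := by simp only [k]; ring
    beta_reduce
    rw [hwz ht]
    linear_combination (-ρ ^ 2) * hzG ht + (ρ * z t) * h2k

/-- Reduction of the integral equation to an ODE: if a continuous `z : [0,T] → ℝ` satisfies
`(γ/(2η)) ∫₀ᵀ z(s) e^{-ρ|t-s|} ds + z(t) = c₀` on `[0,T]`, then `z` is twice continuously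
differentiable on `[0,T]` and `z''(t) - ρ(ρ + γ/η) z(t) = -ρ² c₀` there. -/
theorem stmt_13 (T η γ ρ : ℝ) (hT : 0 < T) (hη : 0 < η) (hγ : 0 < γ) (hρ : 0 < ρ)
    (z : ℝ → ℝ) (hz : ContinuousOn z (Icc 0 T)) (c₀ : ℝ)
    (heq : ∀ t ∈ Icc (0:ℝ) T,
      γ / (2 * η) * (∫ s in (0:ℝ)..T, z s * Real.exp (-ρ * |t - s|)) + z t = c₀) :
    ∃ z' z'' : ℝ → ℝ,
      (∀ t ∈ Icc (0:ℝ) T, HasDerivWithinAt z (z' t) (Icc 0 T) t) ∧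
      (∀ t ∈ Icc (0:ℝ) T, HasDerivWithinAt z' (z'' t) (Icc 0 T) t) ∧
      ContinuousOn z' (Icc 0 T) ∧ ContinuousOn z'' (Icc 0 T) ∧
      (∀ t ∈ Icc (0:ℝ) T, z'' t - ρ * (ρ + γ / η) * z t = -(ρ ^ 2) * c₀) :=
  stmt_13_general T η γ ρ z hz c₀ heq
end

section
/- The explicit optimal strategy solves the Wiener–Hopf equation: there exists a constant c₀ such that for every t ∈ [0,T], (γ/(2η)) ∫₀ᵀ ξ*(s) e^{−ρ|t−s|} ds + ξ*(t) = c₀. -/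
lemma Iexp (c d a b : ℝ) (hc : c ≠ 0) :
    ∫ s in a..b, Real.exp (c*s + d) = (Real.exp (c*b+d) - Real.exp (c*a+d))/c := by
  have h : ∀ s ∈ Set.uIcc a b, HasDerivAt (fun u => Real.exp (c*u+d)/c) (Real.exp (c*s+d)) s := by
    intro s _
    have h1 : HasDerivAt (fun u : ℝ => c*u+d) c s := by
      simpa using ((hasDerivAt_id s).const_mul c).add_const d
    have h2 := (h1.exp).div_const c
    simpa [mul_div_assoc, mul_div_cancel_right₀, hc] using h2
  rw [intervalIntegral.integral_eq_sub_of_hasDerivAt h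
    ((Continuous.intervalIntegrable (by continuity) a b))]
  ring

lemma step (A B k T u v a b : ℝ) (hu : u ≠ 0) (hup : u+k ≠ 0) (hum : u-k ≠ 0) :
    ∫ s in a..b, (A + B*Real.cosh (k*(s-T/2))) * Real.exp (u*s+v)
    = A*((Real.exp (u*b+v) - Real.exp (u*a+v))/u)
    + B/2*((Real.exp ((u+k)*b+(v-k*T/2)) - Real.exp ((u+k)*a+(v-k*T/2)))/(u+k))
    + B/2*((Real.exp ((u-k)*b+(v+k*T/2)) - Real.exp ((u-k)*a+(v+k*T/2)))/(u-k)) := by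
  have hfun : ∀ s : ℝ, (A + B*Real.cosh (k*(s-T/2))) * Real.exp (u*s+v)
      = A*Real.exp (u*s+v) + (B/2)*Real.exp ((u+k)*s+(v-k*T/2))
        + (B/2)*Real.exp ((u-k)*s+(v+k*T/2)) := by
    intro s
    rw [Real.cosh_eq,
      show (u+k)*s+(v-k*T/2) = (k*(s-T/2)) + (u*s+v) by ring,
      show (u-k)*s+(v+k*T/2) = (-(k*(s-T/2))) + (u*s+v) by ring,
      Real.exp_add]
    simp only [Real.exp_add, Real.exp_neg]
    ring
  have i1 : IntervalIntegrable (fun s => A*Real.exp (u*s+v)) MeasureTheory.volume a b :=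
    (Continuous.intervalIntegrable (by continuity) a b)
  have i2 : IntervalIntegrable (fun s => (B/2)*Real.exp ((u+k)*s+(v-k*T/2))) MeasureTheory.volume a b :=
    (Continuous.intervalIntegrable (by continuity) a b)
  have i3 : IntervalIntegrable (fun s => (B/2)*Real.exp ((u-k)*s+(v+k*T/2))) MeasureTheory.volume a b :=
    (Continuous.intervalIntegrable (by continuity) a b)
  simp only [hfun]
  rw [intervalIntegral.integral_add (i1.add i2) i3, intervalIntegral.integral_add i1 i2,
    intervalIntegral.integral_const_mul, intervalIntegral.integral_const_mul,
    intervalIntegral.integral_const_mul, Iexp u v a b hu, Iexp (u+k) (v-k*T/2) a b hup,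
    Iexp (u-k) (v+k*T/2) a b hum]

lemma key (η γ ρ k T t A B : ℝ) (hη : 0 < η) (hρ : 0 < ρ) (hρk : ρ < k)
    (hγe : γ = (η*k^2 - η*ρ^2)/ρ)
    (hA : A = (k^2*η - γ*ρ)*(ρ*Real.cosh (k*T/2) + k*Real.sinh (k*T/2)))
    (hB : B = γ*ρ^2) (ht0 : 0 ≤ t) (htT : t ≤ T) :
    γ/(2*η) * (∫ s in (0:ℝ)..T, (A + B*Real.cosh (k*(s-T/2))) * Real.exp (-ρ*|t-s|))
      + (A + B*Real.cosh (k*(t-T/2))) = A*(γ+η*ρ)/(η*ρ) := by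
  subst hA hB hγe
  have hη' : η ≠ 0 := hη.ne'
  have hρ' : ρ ≠ 0 := hρ.ne'
  have hkpos : 0 < k := lt_trans hρ hρk
  have h1 : ρ + k ≠ 0 := by positivity
  have h2 : ρ - k ≠ 0 := ne_of_lt (by linarith)
  have h3 : (-ρ) ≠ 0 := neg_ne_zero.mpr hρ'
  have h4 : -ρ + k ≠ 0 := ne_of_gt (by linarith)
  have h5 : -ρ - k ≠ 0 := ne_of_lt (by linarith)
  set γ := (η*k^2 - η*ρ^2)/ρ with hγdef
  set A := (k^2*η - γ*ρ)*(ρ*Real.cosh (k*T/2) + k*Real.sinh (k*T/2)) with hAdef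
  set B := γ*ρ^2 with hBdef
  have hF : Continuous fun s : ℝ => (A + B*Real.cosh (k*(s-T/2))) * Real.exp (-ρ*|t-s|) := by
    fun_prop
  have hsplit : (∫ s in (0:ℝ)..T, (A + B*Real.cosh (k*(s-T/2))) * Real.exp (-ρ*|t-s|))
      = (∫ s in (0:ℝ)..t, (A + B*Real.cosh (k*(s-T/2))) * Real.exp (-ρ*|t-s|))
        + ∫ s in t..T, (A + B*Real.cosh (k*(s-T/2))) * Real.exp (-ρ*|t-s|) :=
    (intervalIntegral.integral_add_adjacent_intervals (hF.intervalIntegrable 0 t)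
      (hF.intervalIntegrable t T)).symm
  have hleft : (∫ s in (0:ℝ)..t, (A + B*Real.cosh (k*(s-T/2))) * Real.exp (-ρ*|t-s|))
      = ∫ s in (0:ℝ)..t, (A + B*Real.cosh (k*(s-T/2))) * Real.exp (ρ*s + -(ρ*t)) := by
    apply intervalIntegral.integral_congr
    intro s hs
    rw [Set.uIcc_of_le ht0] at hs
    show (A + B*Real.cosh (k*(s-T/2))) * Real.exp (-ρ*|t-s|)
      = (A + B*Real.cosh (k*(s-T/2))) * Real.exp (ρ*s + -(ρ*t))
    rw [abs_of_nonneg (by linarith [hs.2] : (0:ℝ) ≤ t - s),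
      show -ρ*(t-s) = ρ*s + -(ρ*t) by ring]
  have hright : (∫ s in t..T, (A + B*Real.cosh (k*(s-T/2))) * Real.exp (-ρ*|t-s|))
      = ∫ s in t..T, (A + B*Real.cosh (k*(s-T/2))) * Real.exp (-ρ*s + ρ*t) := by
    apply intervalIntegral.integral_congr
    intro s hs
    rw [Set.uIcc_of_le htT] at hs
    show (A + B*Real.cosh (k*(s-T/2))) * Real.exp (-ρ*|t-s|)
      = (A + B*Real.cosh (k*(s-T/2))) * Real.exp (-ρ*s + ρ*t)
    rw [abs_sub_comm, abs_of_nonneg (by linarith [hs.1] : (0:ℝ) ≤ s - t),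
      show -ρ*(s-t) = -ρ*s + ρ*t by ring]
  rw [hsplit, hleft, hright, step A B k T ρ (-(ρ*t)) 0 t hρ' h1 h2,
    step A B k T (-ρ) (ρ*t) t T h3 h4 h5]
  rw [show ρ*t + -(ρ*t) = 0 by ring,
    show ρ*0 + -(ρ*t) = -(ρ*t) by ring,
    show (ρ+k)*t + (-(ρ*t) - k*T/2) = k*t - k*T/2 by ring,
    show (ρ+k)*0 + (-(ρ*t) - k*T/2) = -(ρ*t) - k*T/2 by ring,
    show (ρ-k)*t + (-(ρ*t) + k*T/2) = k*T/2 - k*t by ring,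
    show (ρ-k)*0 + (-(ρ*t) + k*T/2) = k*T/2 - ρ*t by ring,
    show -ρ*T + ρ*t = ρ*t - ρ*T by ring,
    show -ρ*t + ρ*t = 0 by ring,
    show (-ρ+k)*T + (ρ*t - k*T/2) = ρ*t + k*T/2 - ρ*T by ring,
    show (-ρ+k)*t + (ρ*t - k*T/2) = k*t - k*T/2 by ring,
    show (-ρ-k)*T + (ρ*t + k*T/2) = ρ*t - ρ*T - k*T/2 by ring,
    show (-ρ-k)*t + (ρ*t + k*T/2) = k*T/2 - k*t by ring,
    show k*(t-T/2) = k*t - k*T/2 by ring,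
    hAdef, hBdef, hγdef]
  simp only [Real.cosh_eq, Real.sinh_eq, Real.exp_sub, Real.exp_add, Real.exp_neg,
    Real.exp_zero]
  have e1 := Real.exp_ne_zero (ρ*t)
  have e2 := Real.exp_ne_zero (ρ*T)
  have e3 := Real.exp_ne_zero (k*t)
  have e4 := Real.exp_ne_zero (k*T/2)
  field_simp
  ring

/-- The explicit optimal strategy solves the Wiener–Hopf equation: there exists a constant
`c₀` with `(γ/(2η)) ∫₀ᵀ ξ*(s) e^{-ρ|t-s|} ds + ξ*(t) = c₀` for every `t ∈ [0,T]`. -/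
theorem stmt_15 (T x η γ ρ : ℝ) (hT : 0 < T) (hx : 0 < x) (hη : 0 < η) (hγ : 0 < γ)
    (hρ : 0 < ρ) (k D : ℝ) (hk : k = Real.sqrt (ρ * (ρ + γ / η)))
    (hD : D = k * ρ * T * Real.cosh (k * T / 2) * (k ^ 2 * η - γ * ρ) +
      Real.sinh (k * T / 2) * (γ * ρ * (2 * ρ - k ^ 2 * T) + k ^ 4 * η * T))
    (ξstar : ℝ → ℝ)
    (hξstar : ∀ t : ℝ, ξstar t = k * x * ((k ^ 2 * η - γ * ρ) *
      (ρ * Real.cosh (k * T / 2) + k * Real.sinh (k * T / 2)) +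
      γ * ρ ^ 2 * Real.cosh (k * (t - T / 2))) / D) :
    ∃ c₀ : ℝ, ∀ t ∈ Set.Icc (0:ℝ) T,
      γ / (2 * η) * (∫ s in (0:ℝ)..T, ξstar s * Real.exp (-ρ * |t - s|)) + ξstar t = c₀ := by
  have hη' : η ≠ 0 := hη.ne'
  have hρ' : ρ ≠ 0 := hρ.ne'
  have hk2 : k^2 = ρ^2 + γ*ρ/η := by
    rw [hk, Real.sq_sqrt (by positivity)]; ring
  have hknn : 0 ≤ k := by rw [hk]; exact Real.sqrt_nonneg _
  have hpos : 0 < γ*ρ/η := by positivity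
  have hρk : ρ < k := by nlinarith [hk2, hpos, hρ, hknn]
  have hk2' : k^2*η = ρ^2*η + γ*ρ := by
    have h := hk2
    field_simp at h
    linarith
  have hγe : γ = (η*k^2 - η*ρ^2)/ρ := by
    field_simp
    linarith [hk2']
  refine ⟨k*x/D * ((k^2*η - γ*ρ)*(ρ*Real.cosh (k*T/2) + k*Real.sinh (k*T/2))*(γ+η*ρ)/(η*ρ)),
    fun t ht => ?_⟩
  have hkey := key η γ ρ k T t
    ((k^2*η - γ*ρ)*(ρ*Real.cosh (k*T/2) + k*Real.sinh (k*T/2))) (γ*ρ^2)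
    hη hρ hρk hγe rfl rfl ht.1 ht.2
  have hint : (∫ s in (0:ℝ)..T, ξstar s * Real.exp (-ρ*|t-s|))
      = k*x/D * ∫ s in (0:ℝ)..T,
        ((k^2*η - γ*ρ)*(ρ*Real.cosh (k*T/2) + k*Real.sinh (k*T/2))
          + γ*ρ^2*Real.cosh (k*(s-T/2))) * Real.exp (-ρ*|t-s|) := by
    rw [← intervalIntegral.integral_const_mul]
    apply intervalIntegral.integral_congr
    intro s _
    show ξstar s * Real.exp (-ρ*|t-s|) = _
    rw [hξstar s]
    ring
  rw [hint, hξstar t]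
  linear_combination (k*x/D) * hkey
end
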